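/- arXiv:2111.06294 — 8 statements merged into one kernel-verified Lean document; each statement's English description precedes it below -/
import Mathlib

section
/- For all integers Δ ≥ 1 and m ≥ 1, the generalized Heller constant satisfies h(Δ,m) ≤ h(1,m) + (Δ−1)·h_s^Δ(m), where h_s^Δ(m) is the refined shifted Heller constant. In particular, h(Δ,m) ≤ h(1,m) + (Δ−1)·h_s(m). -/
open Matrix

/-- Every `k×k` minor of `A` is at most `c` in absolute value. -/
def MinorsLE {m n : ℕ} (k : ℕ) (A : Matrix (Fin m) (Fin n) ℝ) (c : ℝ) : Prop :=
  ∀ (f : Fin k ↪ Fin m) (g : Fin k ↪ Fin n), |(A.submatrix f g).det| ≤ c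

/-- `A` is totally 1-submodular: all its minors, of any size, are at most `1`
in absolute value. -/
def Totally1Submodular {m n : ℕ} (A : Matrix (Fin m) (Fin n) ℝ) : Prop :=
  ∀ k : ℕ, MinorsLE k A 1

/-- The shifted matrix `t + A`, whose columns are `t + A_j`. -/
def shiftMat {m n : ℕ} (t : Fin m → ℝ) (A : Matrix (Fin m) (Fin n) ℝ) :
    Matrix (Fin m) (Fin n) ℝ :=
  Matrix.of fun i j => t i + A i j

/-- All entries of `A` lie in `{-1, 0, 1}`. -/
def SignEntries {m n : ℕ} (A : Matrix (Fin m) (Fin n) ℝ) : Prop :=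
  ∀ i j, A i j = -1 ∨ A i j = 0 ∨ A i j = 1

/-- The data admissible for the shifted Heller constant `h_s(m)`: a translation vector
`t ∈ [0,1)^m \ {0}` and a matrix `A ∈ {-1,0,1}^{m×n}` with pairwise distinct columns
such that `t + A` is totally 1-submodular. -/
def ShiftedAdmissible (m n : ℕ) (t : Fin m → ℝ) (A : Matrix (Fin m) (Fin n) ℝ) : Prop :=
  (∀ i, 0 ≤ t i ∧ t i < 1) ∧ t ≠ 0 ∧ SignEntries A ∧
    Function.Injective A.transpose ∧ Totally1Submodular (shiftMat t A)

/-- `Δ_m(A) = Δ`: every `m×m` minor of the integer matrix `A` (with `m` rows) is at most `Δ`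
in absolute value, and some `m×m` minor attains `Δ` in absolute value. -/
def DeltaEq {m n : ℕ} (A : Matrix (Fin m) (Fin n) ℤ) (Δ : ℤ) : Prop :=
  (∀ (f : Fin m ↪ Fin m) (g : Fin m ↪ Fin n), |(A.submatrix f g).det| ≤ Δ) ∧
  (∃ (f : Fin m ↪ Fin m) (g : Fin m ↪ Fin n), |(A.submatrix f g).det| = Δ)

/-- The generalized Heller constant `h(Δ, m)`. -/
noncomputable def hGen (Δ : ℕ) (m : ℕ) : ℕ :=
  sSup {n : ℕ | ∃ A : Matrix (Fin m) (Fin n) ℤ,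
    Function.Injective A.transpose ∧ DeltaEq A (Δ : ℤ)}

/-- The shifted Heller constant `h_s(m)`. -/
noncomputable def hShifted (m : ℕ) : ℕ :=
  sSup {n : ℕ | ∃ (t : Fin m → ℝ) (A : Matrix (Fin m) (Fin n) ℝ), ShiftedAdmissible m n t A}

/-- The refined shifted Heller constant `h_s^Δ(m)`, where the translation vector is
additionally required to lie in `(1/Δ)ℤ^m`. -/
noncomputable def hShiftedRefined (Δ : ℕ) (m : ℕ) : ℕ :=
  sSup {n : ℕ | ∃ (t : Fin m → ℝ) (A : Matrix (Fin m) (Fin n) ℝ),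
    ShiftedAdmissible m n t A ∧ ∀ i, ∃ z : ℤ, (Δ : ℝ) * t i = (z : ℝ)}

/-!
Choose `m` columns `B` of `A` with `|det B| = Δ`. By the maximality of `Δ`, every minor of
`C = B⁻¹A`, of any size, is at most `1` in absolute value: a `k × k` minor of `C` equals
`det B' / det B`, where `B'` arises from `B` by exchanging `k` of its columns for other columns
of `A`. Group the columns of `A` by the fractional parts of the corresponding columns of `C`.
These only depend on the class of the column in `ℤ^m / Bℤ^m`, a group of order `Δ`, so at most
`Δ` groups occur. The integral columns of `C` form an integer matrix with all minors in
`{-1,0,1}` that contains the identity, so there are at most `h(1,m)` of them. A group with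
fractional part `t ≠ 0` is `t + A'` with `A' ∈ {-1,0,1}` and `Δt` integral, so it has at most
`h_s^Δ(m)` and at most `h_s(m)` members.
-/

namespace Matrix

variable {K ι κ ν : Type*} [Fintype ι] [DecidableEq ι] [Fintype κ] [DecidableEq κ]

theorem det_eq_det_submatrix_of_col_eq_one [CommRing K] (M : Matrix ι ι K) (f : κ ↪ ι)
    (h : ∀ c ∉ Set.range f, ∀ i, M i c = (1 : Matrix ι ι K) i c) :
    M.det = (M.submatrix f f).det := by
  classical
  rw [M.twoBlockTriangular_det' (· ∈ Set.range f) fun i hi j hj => by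
    rw [h j hj, one_apply_ne (by rintro rfl; exact hj hi)]]
  have hcompl : toSquareBlockProp M (· ∉ Set.range f) = 1 := by
    ext ⟨i, hi⟩ ⟨j, hj⟩
    simp [toSquareBlockProp_def, h j hj, one_apply, Subtype.ext_iff]
  rw [hcompl, det_one, mul_one, show M.submatrix f f =
    (toSquareBlockProp M (· ∈ Set.range f)).submatrix (Equiv.ofInjective f f.injective)
      (Equiv.ofInjective f f.injective) from rfl]
  convert (det_submatrix_equiv_self _ _).symm

omit [DecidableEq ι] in
theorem submatrix_id_mul {κ' : Type*} [CommRing K] (M : Matrix ι ι K) (A : Matrix ι ν K)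
    (g : κ' → ν) : (M * A).submatrix id g = M * A.submatrix id g :=
  rfl

theorem inv_mul_submatrix_self [CommRing K] (A : Matrix ι ν K) (g : ι → ν)
    (hB : IsUnit (A.submatrix id g).det) : ((A.submatrix id g)⁻¹ * A).submatrix id g = 1 := by
  rw [submatrix_id_mul, nonsing_inv_mul _ hB]

theorem det_submatrix_inv_mul [Field K] (A : Matrix ι ν K) (g : ι → ν)
    (hB : (A.submatrix id g).det ≠ 0) (f : κ ↪ ι) (g' : κ → ν) :
    ∃ g'' : ι → ν, (((A.submatrix id g)⁻¹ * A).submatrix f g').det =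
      (A.submatrix id g'').det / (A.submatrix id g).det := by
  set C := (A.submatrix id g)⁻¹ * A
  -- exchange the columns `g ∘ f` of the basis for `g'`; the others stay unit vectors in `C`
  refine ⟨Function.extend f g' g, ?_⟩
  have hC : C.submatrix id g = 1 := inv_mul_submatrix_self A g (isUnit_iff_ne_zero.2 hB)
  have hcols : ∀ c ∉ Set.range f, ∀ i,
      C.submatrix id (Function.extend f g' g) i c = (1 : Matrix ι ι K) i c := by
    intro c hc i
    rw [← hC, submatrix_apply, submatrix_apply, Function.extend_apply' _ _ _ hc]
  have hsub : (C.submatrix id (Function.extend f g' g)).submatrix f f = C.submatrix f g' := by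
    ext a b
    simp [f.injective.extend_apply]
  rw [← hsub, ← det_eq_det_submatrix_of_col_eq_one _ f hcols, submatrix_id_mul, det_mul,
    det_nonsing_inv, Ring.inverse_eq_inv', inv_mul_eq_div]

theorem abs_det_submatrix_inv_mul_le_one [Field K] [LinearOrder K] [IsStrictOrderedRing K]
    (A : Matrix ι ν K) (g : ι → ν) (hB : (A.submatrix id g).det ≠ 0)
    (hmax : ∀ g' : ι → ν, |(A.submatrix id g').det| ≤ |(A.submatrix id g).det|)
    (f : κ ↪ ι) (g' : κ → ν) :
    |(((A.submatrix id g)⁻¹ * A).submatrix f g').det| ≤ 1 := by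
  obtain ⟨g'', h⟩ := det_submatrix_inv_mul A g hB f g'
  rw [h, abs_div, div_le_one (abs_pos.2 hB)]
  exact hmax g''

theorem injective_transpose_mul [CommRing K] {M : Matrix ι ι K} (hM : IsUnit M.det)
    {A : Matrix ι ν K} (hA : Function.Injective Aᵀ) : Function.Injective (M * A)ᵀ :=
  (mulVec_injective_of_isUnit ((isUnit_iff_isUnit_det M).2 hM)).comp hA

theorem natCard_quotient_range_mulVecLin {m : ℕ} (B : Matrix (Fin m) (Fin m) ℤ)
    (hB : B.det ≠ 0) :
    Nat.card ((Fin m → ℤ) ⧸ LinearMap.range B.mulVecLin) = B.det.natAbs := by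
  rw [← Submodule.natAbs_det_equiv _
    (LinearEquiv.ofInjective _ (mulVec_injective_of_det_ne_zero hB)), ← LinearMap.det_toLin' B]
  rfl

end Matrix

theorem Finset.card_le_add_mul_of_card_fiber_le {α β : Type*} [Fintype α] [DecidableEq β]
    (q : α → β) {T : Finset β} (hT : ∀ x, q x ∈ T) {y₀ : β} (hy₀ : y₀ ∈ T) {N a b : ℕ}
    (hN : T.card ≤ N) (ha : (univ.filter fun x => q x = y₀).card ≤ a)
    (hb : ∀ y ≠ y₀, (univ.filter fun x => q x = y).card ≤ b) :
    Fintype.card α ≤ a + (N - 1) * b := by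
  rw [← card_univ, card_eq_sum_card_fiberwise fun x _ => hT x, ← add_sum_erase T _ hy₀]
  refine add_le_add ha ?_
  calc ∑ y ∈ T.erase y₀, (univ.filter fun x => q x = y).card
      ≤ (T.erase y₀).card * b := sum_le_card_nsmul _ _ _ fun y hy => hb y (ne_of_mem_erase hy)
    _ ≤ (N - 1) * b := by rw [card_erase_of_mem hy₀]; gcongr

variable {m n : ℕ}

theorem Totally1Submodular.abs_apply_le_one {M : Matrix (Fin m) (Fin n) ℝ}
    (hM : Totally1Submodular M) (i : Fin m) (j : Fin n) : |M i j| ≤ 1 := by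
  simpa using hM 1 ⟨fun _ => i, Function.injective_of_subsingleton _⟩
    ⟨fun _ => j, Function.injective_of_subsingleton _⟩

theorem Totally1Submodular.submatrix_id {p : ℕ} {M : Matrix (Fin m) (Fin n) ℝ}
    (hM : Totally1Submodular M) (e : Fin p ↪ Fin n) : Totally1Submodular (M.submatrix id e) :=
  fun _ f g => hM _ f (g.trans e)

theorem card_le_card_pow_of_injective_transpose {α : Type*} {M : Matrix (Fin m) (Fin n) α}
    (s : Finset α) (hs : ∀ i j, M i j ∈ s) (hM : Function.Injective Mᵀ) :
    n ≤ s.card ^ m := by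
  have hinj : Function.Injective fun j i => (⟨M i j, hs i j⟩ : s) := fun j₁ j₂ h =>
    hM (funext fun i => congrArg Subtype.val (congrFun h i))
  simpa using Fintype.card_le_of_injective _ hinj

theorem SignEntries.card_le_three_pow {M : Matrix (Fin m) (Fin n) ℝ} (hM : SignEntries M)
    (hinj : Function.Injective Mᵀ) : n ≤ 3 ^ m := by
  have hs : ∀ i j, M i j ∈ ({-1, 0, 1} : Finset ℝ) := by simpa [SignEntries] using hM
  have hcard : ({-1, 0, 1} : Finset ℝ).card = 3 := by norm_num
  simpa [hcard] using card_le_card_pow_of_injective_transpose _ hs hinj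

theorem signEntries_of_int_of_abs_le_one {M : Matrix (Fin m) (Fin n) ℝ}
    (hint : ∀ i j, ∃ z : ℤ, M i j = z) (habs : ∀ i j, |M i j| ≤ 1) : SignEntries M := by
  intro i j
  obtain ⟨z, hz⟩ := hint i j
  have := habs i j
  rw [hz, ← Int.cast_abs, ← Int.cast_one, Int.cast_le, abs_le] at this
  rw [hz]
  rcases (by omega : z = -1 ∨ z = 0 ∨ z = 1) with rfl | rfl | rfl <;> simp

theorem le_hShifted {p : ℕ} {t : Fin m → ℝ} {M : Matrix (Fin m) (Fin p) ℝ}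
    (h : ShiftedAdmissible m p t M) : p ≤ hShifted m :=
  le_csSup ⟨3 ^ m, fun _ ⟨_, _, h'⟩ => h'.2.2.1.card_le_three_pow h'.2.2.2.1⟩ ⟨t, M, h⟩

theorem le_hShiftedRefined {Δ p : ℕ} {t : Fin m → ℝ} {M : Matrix (Fin m) (Fin p) ℝ}
    (h : ShiftedAdmissible m p t M) (ht : ∀ i, ∃ z : ℤ, (Δ : ℝ) * t i = z) :
    p ≤ hShiftedRefined Δ m :=
  le_csSup ⟨3 ^ m, fun _ ⟨_, _, h', _⟩ => h'.2.2.1.card_le_three_pow h'.2.2.2.1⟩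
    ⟨t, M, h, ht⟩

theorem det_map_intCast_submatrix {k : ℕ} (A : Matrix (Fin m) (Fin n) ℤ) (f : Fin k → Fin m)
    (g : Fin k → Fin n) :
    ((A.map (Int.cast : ℤ → ℝ)).submatrix f g).det = ((A.submatrix f g).det : ℝ) :=
  ((Int.castRingHom ℝ).map_det _).symm

noncomputable def basisCoords (A : Matrix (Fin m) (Fin n) ℤ) (g : Fin m → Fin n) :
    Matrix (Fin m) (Fin n) ℝ :=
  ((A.map (Int.cast : ℤ → ℝ)).submatrix id g)⁻¹ * A.map (Int.cast : ℤ → ℝ)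

section BasisCoords

variable (A : Matrix (Fin m) (Fin n) ℤ) {g : Fin m → Fin n} (hB : (A.submatrix id g).det ≠ 0)
include hB

theorem det_map_intCast_submatrix_ne_zero :
    ((A.map (Int.cast : ℤ → ℝ)).submatrix id g).det ≠ 0 := by
  rwa [det_map_intCast_submatrix, Int.cast_ne_zero]

theorem totally1Submodular_basisCoords
    (hmax : ∀ g' : Fin m → Fin n, |(A.submatrix id g').det| ≤ |(A.submatrix id g).det|) :
    Totally1Submodular (basisCoords A g) := fun _ f g' =>
  abs_det_submatrix_inv_mul_le_one _ g (det_map_intCast_submatrix_ne_zero A hB)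
    (fun g'' => by simpa only [det_map_intCast_submatrix, ← Int.cast_abs] using
      Int.cast_le.2 (hmax g'')) f g'

theorem basisCoords_submatrix_self : (basisCoords A g).submatrix id g = 1 :=
  inv_mul_submatrix_self _ g (det_map_intCast_submatrix_ne_zero A hB).isUnit

theorem injective_transpose_basisCoords (hA : Function.Injective Aᵀ) :
    Function.Injective (basisCoords A g)ᵀ :=
  injective_transpose_mul
    (isUnit_nonsing_inv_det _ (det_map_intCast_submatrix_ne_zero A hB).isUnit)
    ((Int.cast_injective.comp_left).comp hA)

theorem exists_int_eq_abs_det_mul_basisCoords (i : Fin m) (j : Fin n) :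
    ∃ z : ℤ, (|(A.submatrix id g).det| : ℝ) * basisCoords A g i j = z := by
  set B := (A.map (Int.cast : ℤ → ℝ)).submatrix id g
  have hadj : B.det • basisCoords A g = ((A.submatrix id g).adjugate * A).map Int.cast := by
    rw [basisCoords, ← Matrix.smul_mul, inv_def, smul_smul,
      Ring.mul_inverse_cancel _ (det_map_intCast_submatrix_ne_zero A hB).isUnit, one_smul]
    exact (congrArg (· * _) ((Int.castRingHom ℝ).map_adjugate _).symm).trans
      (Matrix.map_mul (f := Int.castRingHom ℝ)).symm
  have hij := congrFun (congrFun hadj i) j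
  rw [Matrix.smul_apply, smul_eq_mul, det_map_intCast_submatrix] at hij
  rcases abs_choice ((A.submatrix id g).det : ℝ) with h | h
  · exact ⟨_, by rw [h, hij]; rfl⟩
  · exact ⟨-((A.submatrix id g).adjugate * A) i j, by rw [h, neg_mul, hij]; push_cast; rfl⟩

theorem exists_finset_fract_basisCoords :
    ∃ T : Finset (Fin m → ℝ), 0 ∈ T ∧ T.card ≤ (A.submatrix id g).det.natAbs ∧
      ∀ j, Int.fract ∘ (basisCoords A g)ᵀ j ∈ T := by
  set B := A.submatrix id g
  set P := ((A.map (Int.cast : ℤ → ℝ)).submatrix id g)⁻¹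
  set L := LinearMap.range B.mulVecLin
  let frac : (Fin m → ℤ) → Fin m → ℝ := fun v i => Int.fract ((P *ᵥ (Int.cast ∘ v)) i)
  have hfrac : ∀ v w, v - w ∈ L → frac v = frac w := by
    rintro v w ⟨z, hz⟩
    have hPB : P * B.map Int.cast = 1 :=
      nonsing_inv_mul _ (det_map_intCast_submatrix_ne_zero A hB).isUnit
    have hcast : (Int.cast ∘ (v - w) : Fin m → ℝ) = B.map Int.cast *ᵥ (Int.cast ∘ z) := by
      rw [← hz]
      exact funext ((Int.castRingHom ℝ).map_mulVec B z)
    have hdiff : P *ᵥ (Int.cast ∘ v) - P *ᵥ (Int.cast ∘ w) = Int.cast ∘ z :=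
      calc P *ᵥ (Int.cast ∘ v) - P *ᵥ (Int.cast ∘ w) = P *ᵥ (Int.cast ∘ (v - w)) := by
            rw [← mulVec_sub]; congr 1; ext; simp
        _ = Int.cast ∘ z := by rw [hcast, mulVec_mulVec, hPB, one_mulVec]
    funext i
    exact Int.fract_eq_fract.2 ⟨z i, congrFun hdiff i⟩
  let φ : (Fin m → ℤ) ⧸ L → Fin m → ℝ :=
    Quotient.lift frac fun v w h => hfrac v w ((Submodule.quotientRel_def L).1 h)
  have hcard : Nat.card ((Fin m → ℤ) ⧸ L) = B.det.natAbs :=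
    B.natCard_quotient_range_mulVecLin hB
  have : Finite ((Fin m → ℤ) ⧸ L) :=
    Nat.finite_of_card_ne_zero (by rw [hcard]; exact Int.natAbs_ne_zero.2 hB)
  have := Fintype.ofFinite ((Fin m → ℤ) ⧸ L)
  refine ⟨Finset.univ.image φ,
    Finset.mem_image.2 ⟨Submodule.Quotient.mk 0, Finset.mem_univ _, ?_⟩, ?_,
    fun j => Finset.mem_image.2 ⟨Submodule.Quotient.mk fun i => A i j, Finset.mem_univ _, rfl⟩⟩
  · show frac 0 = 0
    funext i
    simp [frac]
  · rw [← hcard, Nat.card_eq_fintype_card]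
    exact Finset.card_image_le

end BasisCoords

theorem DeltaEq.exists_col_basis {A : Matrix (Fin m) (Fin n) ℤ} {Δ : ℤ} (hA : DeltaEq A Δ) :
    ∃ g : Fin m → Fin n, |(A.submatrix id g).det| = Δ ∧
      ∀ g' : Fin m → Fin n, |(A.submatrix id g').det| ≤ Δ := by
  obtain ⟨hle, f, g, hfg⟩ := hA
  have hg : |(A.submatrix id g).det| = Δ := by
    have hf : Function.Bijective f :=
      (Fintype.bijective_iff_injective_and_card f).2 ⟨f.injective, rfl⟩
    rw [← hfg, ← abs_det_submatrix_equiv_equiv (Equiv.ofBijective f hf) (Equiv.refl _)]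
    rfl
  refine ⟨g, hg, fun g' => ?_⟩
  by_cases hg' : Function.Injective g'
  · exact hle (Function.Embedding.refl _) ⟨g', hg'⟩
  · obtain ⟨a, b, hab, hne⟩ := Function.not_injective_iff.1 hg'
    rw [det_zero_of_column_eq hne fun i => by simp [hab], abs_zero, ← hg]
    exact abs_nonneg _

theorem card_le_three_pow_of_deltaEq_one {A : Matrix (Fin m) (Fin n) ℤ}
    (hinj : Function.Injective Aᵀ) (hA : DeltaEq A 1) : n ≤ 3 ^ m := by
  obtain ⟨g, hg, hmax⟩ := hA.exists_col_basis
  have hB : (A.submatrix id g).det ≠ 0 := fun h => by simp [h] at hg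
  refine SignEntries.card_le_three_pow ?_ (injective_transpose_basisCoords A hB hinj)
  have hT := totally1Submodular_basisCoords A hB (by simpa only [hg] using hmax)
  refine signEntries_of_int_of_abs_le_one (fun i j => ?_) hT.abs_apply_le_one
  simpa [← Int.cast_abs, hg] using exists_int_eq_abs_det_mul_basisCoords A hB i j

theorem le_hGen_one {p : ℕ} {A : Matrix (Fin m) (Fin p) ℤ} (hinj : Function.Injective Aᵀ)
    (hA : DeltaEq A 1) : p ≤ hGen 1 m :=
  le_csSup ⟨3 ^ m, fun _ ⟨_, hinj', hA'⟩ => card_le_three_pow_of_deltaEq_one hinj'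
    (by simpa using hA')⟩ ⟨A, hinj, by simpa using hA⟩

section Fibers

variable {M : Matrix (Fin m) (Fin n) ℝ} (hM : Totally1Submodular M)
  (hinj : Function.Injective Mᵀ)
include hM hinj

theorem card_fract_eq_zero_le_hGen_one {σ : Fin m → Fin n} (hσ : M.submatrix id σ = 1) :
    (Finset.univ.filter fun j => Int.fract ∘ Mᵀ j = 0).card ≤ hGen 1 m := by
  set s := Finset.univ.filter fun j => Int.fract ∘ Mᵀ j = 0
  set e := s.orderEmbOfFin rfl
  set Z : Matrix (Fin m) (Fin s.card) ℤ := Matrix.of fun i j => ⌊M i (e j)⌋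
  have hZ : ∀ i j, (Z i j : ℝ) = M i (e j) := fun i j => by
    have := congrFun (Finset.mem_filter.1 (s.orderEmbOfFin_mem rfl j)).2 i
    simp only [Function.comp_apply, transpose_apply, Pi.zero_apply] at this
    simpa [Z, ← Int.self_sub_fract] using this
  have hdet : ∀ {k} (f : Fin k → Fin m) (g : Fin k → Fin s.card),
      ((Z.submatrix f g).det : ℝ) = (M.submatrix f (e ∘ g)).det := by
    intro k f g
    rw [← det_map_intCast_submatrix]
    exact congrArg det (Matrix.ext fun i j => hZ _ _)
  have hcol : ∀ i i', M i' (σ i) = (1 : Matrix (Fin m) (Fin m) ℝ) i' i := fun i i' =>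
    congrFun (congrFun hσ i') i
  have hσs : ∀ i, ∃ j, e j = σ i := fun i => by
    rw [← Set.mem_range, Finset.range_orderEmbOfFin, Finset.coe_filter]
    refine ⟨Finset.mem_univ _, funext fun i' => ?_⟩
    simp only [Function.comp_apply, transpose_apply, hcol, one_apply]
    split_ifs <;> simp
  choose σ' hσ' using hσs
  have hσ'inj : Function.Injective σ' := fun a b hab => by
    by_contra hne
    have := hcol b a
    rw [← hσ', ← hab, hσ', hcol, one_apply_eq, one_apply_ne hne] at this
    exact one_ne_zero this
  refine le_hGen_one (A := Z) (fun j₁ j₂ h => e.injective (hinj (funext fun i => ?_)))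
    ⟨fun f g => ?_, ⟨Function.Embedding.refl _, ⟨σ', hσ'inj⟩, ?_⟩⟩
  · simpa only [transpose_apply, ← hZ] using congrArg Int.cast (congrFun h i)
  · rw [← Int.cast_le (R := ℝ), Int.cast_abs, hdet]
    exact_mod_cast hM m f (g.trans e.toEmbedding)
  · rw [← Int.cast_inj (α := ℝ), Int.cast_abs, hdet]
    change |(M.submatrix id (e ∘ σ')).det| = _
    rw [show e ∘ σ' = σ from funext hσ', hσ]
    simp

theorem card_fract_eq_le_hShiftedRefined_and_hShifted {Δ : ℕ}
    (hΔ : ∀ i j, ∃ z : ℤ, (Δ : ℝ) * M i j = z) {t : Fin m → ℝ} (ht : t ≠ 0) :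
    (Finset.univ.filter fun j => Int.fract ∘ Mᵀ j = t).card ≤ hShiftedRefined Δ m ∧
      (Finset.univ.filter fun j => Int.fract ∘ Mᵀ j = t).card ≤ hShifted m := by
  set s := Finset.univ.filter fun j => Int.fract ∘ Mᵀ j = t
  rcases s.eq_empty_or_nonempty with hs | ⟨j₀, hj₀⟩
  · simp [hs]
  have hfract : ∀ j ∈ s, ∀ i, Int.fract (M i j) = t i := fun j hj i =>
    congrFun (Finset.mem_filter.1 hj).2 i
  set e := s.orderEmbOfFin rfl
  set A' : Matrix (Fin m) (Fin s.card) ℝ := Matrix.of fun i j => (⌊M i (e j)⌋ : ℝ)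
  have hshift : shiftMat t A' = M.submatrix id e := by
    ext i j
    simp [shiftMat, A', ← hfract _ (s.orderEmbOfFin_mem rfl j) i, e]
  have hsign : SignEntries A' := by
    refine signEntries_of_int_of_abs_le_one (fun i j => ⟨_, rfl⟩) fun i j => abs_le.2 ⟨?_, ?_⟩
    · have h : (-1 : ℤ) ≤ ⌊M i (e j)⌋ :=
        Int.le_floor.2 (by exact_mod_cast (abs_le.1 (hM.abs_apply_le_one i (e j))).1)
      exact le_of_eq_of_le (by norm_num) (Int.cast_le (R := ℝ).2 h)
    · exact (Int.floor_le _).trans (abs_le.1 (hM.abs_apply_le_one i (e j))).2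
  have hcol : ∀ i j, M i (e j) = t i + A' i j := fun i j =>
    (congrFun (congrFun hshift i) j).symm
  have hinj' : Function.Injective A'ᵀ := fun j₁ j₂ h =>
    e.injective <| hinj <| funext fun i => by
      rw [transpose_apply, transpose_apply, hcol, hcol]
      exact congrArg _ (congrFun h i)
  have hadm : ShiftedAdmissible m s.card t A' :=
    ⟨fun i => hfract j₀ hj₀ i ▸ ⟨Int.fract_nonneg _, Int.fract_lt_one _⟩, ht, hsign, hinj',
      hshift ▸ hM.submatrix_id e.toEmbedding⟩
  refine ⟨le_hShiftedRefined hadm fun i => ?_, le_hShifted hadm⟩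
  obtain ⟨z, hz⟩ := hΔ i j₀
  exact ⟨z - Δ * ⌊M i j₀⌋, by
    rw [← hfract j₀ hj₀ i, Int.fract, mul_sub, hz]; push_cast; ring⟩

end Fibers

theorem stmt6_general (Δ m : ℕ) (hΔ : 1 ≤ Δ)
    (n : ℕ) (A : Matrix (Fin m) (Fin n) ℤ)
    (hcols : Function.Injective A.transpose) (hA : DeltaEq A (Δ : ℤ)) :
    n ≤ hGen 1 m + (Δ - 1) * hShiftedRefined Δ m ∧
    n ≤ hGen 1 m + (Δ - 1) * hShifted m := by
  obtain ⟨g, hg, hmax⟩ := hA.exists_col_basis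
  have hB : (A.submatrix id g).det ≠ 0 := fun h => by rw [h, abs_zero] at hg; omega
  set C := basisCoords A g
  have hC := totally1Submodular_basisCoords A hB (by simpa only [hg] using hmax)
  have hCinj := injective_transpose_basisCoords A hB hcols
  have hΔC : ∀ i j, ∃ z : ℤ, (Δ : ℝ) * C i j = z := by
    simpa [← Int.cast_abs, hg] using exists_int_eq_abs_det_mul_basisCoords A hB
  obtain ⟨T, hT0, hTcard, hT⟩ := exists_finset_fract_basisCoords A hB
  have hTΔ : T.card ≤ Δ := by
    have := Int.natCast_natAbs (A.submatrix id g).det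
    omega
  have hzero := card_fract_eq_zero_le_hGen_one hC hCinj (basisCoords_submatrix_self A hB)
  have hfibers := fun t (ht : t ≠ 0) =>
    card_fract_eq_le_hShiftedRefined_and_hShifted hC hCinj hΔC ht
  rw [← Fintype.card_fin n]
  exact ⟨Finset.card_le_add_mul_of_card_fiber_le _ hT hT0 hTΔ hzero fun t ht => (hfibers t ht).1,
    Finset.card_le_add_mul_of_card_fiber_le _ hT hT0 hTΔ hzero fun t ht => (hfibers t ht).2⟩

theorem stmt6 (Δ m : ℕ) (hΔ : 1 ≤ Δ) (hm : 1 ≤ m)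
    (n : ℕ) (A : Matrix (Fin m) (Fin n) ℤ)
    (hcols : Function.Injective A.transpose) (hA : DeltaEq A (Δ : ℤ)) :
    n ≤ hGen 1 m + (Δ - 1) * hShiftedRefined Δ m ∧
    n ≤ hGen 1 m + (Δ - 1) * hShifted m :=
  stmt6_general Δ m hΔ n A hcols hA
end

section
/- The shifted Heller constant in dimension 3 equals 12: (a) there exist a vector t ∈ [0,1)^3 \ {0} and a matrix A ∈ {-1,0,1}^{3×12} with pairwise distinct columns such that t+A is totally 1-submodular; and (b) for every t ∈ [0,1)^3 \ {0} and every A ∈ {-1,0,1}^{3×n} with pairwise distinct columns such that t+A is totally 1-submodular, one has n ≤ 12. -/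
open Matrix

/-!
An entry `1` in a row `i` with `t i > 0` would be a `1 × 1` minor `t i + 1 > 1`. So if two
coordinates of `t` are positive, the columns lie in `{-1,0}² × {-1,0,1}`, which has 12 elements.

Otherwise, up to a permutation of the rows, `t = (s, 0, 0)` with `s > 0`, and row `0` of `A` takes
only the values `-1` and `0`. On each of the two resulting column classes the first row of `t + A`
is a constant `c = s` or `c = s - 1`, and the last two rows are distinct points of `{-1,0,1}²`.
The `2 × 2` minors in rows `1, 2` and the `3 × 3` minors (`c` times a doubled triangle area)
then leave room for at most 7 points, and at most 5 when `3|c| > 1`, by a finite check. As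
`max(s, 1 - s) ≥ 1/2`, one class has at most 5 columns and the other at most 7.

The 12 columns `(a, b, z)` with `a, b ∈ {-1, 0}` and `t = (1/2, 1/2, 0)` attain the bound.
-/

open Finset

section Minors

variable {m n : ℕ} {M : Matrix (Fin m) (Fin n) ℝ}

theorem Totally1Submodular.abs_det_submatrix_le_one (hM : Totally1Submodular M) {k : ℕ}
    (f : Fin k → Fin m) (g : Fin k → Fin n) : |(M.submatrix f g).det| ≤ 1 := by
  by_cases hf : f.Injective
  · by_cases hg : g.Injective
    · exact hM k ⟨f, hf⟩ ⟨g, hg⟩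
    · obtain ⟨a, b, hab, hne⟩ : ∃ a b, g a = g b ∧ a ≠ b := by
        simpa [Function.Injective] using hg
      rw [det_zero_of_column_eq hne fun i => by simp [hab], abs_zero]
      exact zero_le_one
  · obtain ⟨a, b, hab, hne⟩ : ∃ a b, f a = f b ∧ a ≠ b := by
      simpa [Function.Injective] using hf
    rw [det_zero_of_row_eq hne (by ext j; simp [hab]), abs_zero]
    exact zero_le_one

theorem Totally1Submodular.abs_le_one (hM : Totally1Submodular M) (i : Fin m) (j : Fin n) :
    |M i j| ≤ 1 := by
  have h := hM.abs_det_submatrix_le_one ![i] ![j]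
  rwa [det_fin_one] at h

theorem Totally1Submodular.submatrix (hM : Totally1Submodular M) {m' n' : ℕ}
    (r : Fin m' → Fin m) (c : Fin n' → Fin n) : Totally1Submodular (M.submatrix r c) :=
  fun _ f g => hM.abs_det_submatrix_le_one (r ∘ f) (c ∘ g)

theorem totally1Submodular_of_three_rows {M : Matrix (Fin 3) (Fin n) ℝ}
    (h₁ : ∀ i j, |(M.submatrix ![i] ![j]).det| ≤ 1)
    (h₂ : ∀ i i' j j', |(M.submatrix ![i, i'] ![j, j']).det| ≤ 1)
    (h₃ : ∀ j j' j'', |(M.submatrix id ![j, j', j'']).det| ≤ 1) :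
    Totally1Submodular M := by
  intro k f g
  match k with
  | 0 => simp
  | 1 =>
    convert h₁ (f 0) (g 0) using 4 <;> ext a <;> fin_cases a <;> rfl
  | 2 =>
    convert h₂ (f 0) (f 1) (g 0) (g 1) using 4 <;> ext a <;> fin_cases a <;> rfl
  | 3 =>
    let σ := Equiv.ofBijective f (Finite.injective_iff_bijective.mp f.injective)
    have hfg : M.submatrix f g =
        (M.submatrix id ![g 0, g 1, g 2]).submatrix σ (Equiv.refl _) := by
      ext a b
      fin_cases b <;> rfl
    rw [hfg, abs_det_submatrix_equiv_equiv]
    exact h₃ _ _ _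
  | k + 4 => simpa using Fintype.card_le_of_embedding f

theorem abs_det_submatrix_inv_two_smul_intCast_le_one (D : Matrix (Fin m) (Fin n) ℤ) {k : ℕ}
    (f : Fin k → Fin m) (g : Fin k → Fin n) (h : |(D.submatrix f g).det| ≤ 2 ^ k) :
    |(((2 : ℝ)⁻¹ • D.map ((↑) : ℤ → ℝ)).submatrix f g).det| ≤ 1 := by
  rw [show ((2 : ℝ)⁻¹ • D.map ((↑) : ℤ → ℝ)).submatrix f g =
      (2 : ℝ)⁻¹ • (D.submatrix f g).map ((↑) : ℤ → ℝ) from rfl, det_smul, ← Int.cast_det,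
    Fintype.card_fin, abs_mul, abs_pow, abs_inv, abs_two, inv_pow, inv_mul_le_one₀ (by positivity)]
  exact_mod_cast h

end Minors

section SignEntries

variable {m n : ℕ} {A : Matrix (Fin m) (Fin n) ℝ}

theorem SignEntries.floor_mem (hA : SignEntries A) (i : Fin m) (j : Fin n) :
    ⌊A i j⌋ ∈ ({-1, 0, 1} : Finset ℤ) := by
  rcases hA i j with h | h | h <;> norm_num [h]

theorem SignEntries.intCast_floor (hA : SignEntries A) (i : Fin m) (j : Fin n) :
    (⌊A i j⌋ : ℝ) = A i j := by
  rcases hA i j with h | h | h <;> norm_num [h]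

theorem Totally1Submodular.ne_one_of_shift_pos {t : Fin m → ℝ}
    (hM : Totally1Submodular (shiftMat t A)) {i : Fin m} (ht : 0 < t i) (j : Fin n) :
    A i j ≠ 1 := by
  intro h
  have := (abs_le.mp (hM.abs_le_one i j)).2
  simp only [shiftMat, of_apply, h] at this
  linarith

theorem card_le_two_pow_mul_three_pow {t : Fin m → ℝ} (hA : SignEntries A)
    (hinj : Function.Injective Aᵀ) (hM : Totally1Submodular (shiftMat t A)) :
    n ≤ 2 ^ #(univ.filter (0 < t ·)) * 3 ^ (m - #(univ.filter (0 < t ·))) := by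
  let S : Fin m → Finset ℝ := fun i => if 0 < t i then {-1, 0} else {-1, 0, 1}
  have hS : ∀ j, Aᵀ j ∈ Fintype.piFinset S := fun j => Fintype.mem_piFinset.2 fun i => by
    by_cases ht : 0 < t i
    · have := hM.ne_one_of_shift_pos ht j
      rcases hA i j with h | h | h <;> simp_all [S]
    · rcases hA i j with h | h | h <;> simp [S, ht, h]
  have hsplit := card_filter_add_card_filter_not (s := univ) (0 < t ·)
  rw [card_univ, Fintype.card_fin] at hsplit
  calc n = #(univ : Finset (Fin n)) := (card_fin n).symm
    _ ≤ #(Fintype.piFinset S) := card_le_card_of_injOn _ (fun j _ => hS j) hinj.injOn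
    _ = ∏ i, if 0 < t i then 2 else 3 := by
      rw [Fintype.card_piFinset]
      refine prod_congr rfl fun i _ => ?_
      split_ifs with ht <;> norm_num [S, ht]
    _ = _ := by rw [prod_ite, prod_const, prod_const, ← Nat.eq_sub_of_add_eq' hsplit]

end SignEntries

def cross (u v : ℤ × ℤ) : ℤ := u.1 * v.2 - v.1 * u.2

def signGrid : Finset (ℤ × ℤ) := {-1, 0, 1} ×ˢ {-1, 0, 1}

set_option maxRecDepth 100000 in
theorem card_le_seven_of_abs_cross_le_one {S : Finset (ℤ × ℤ)} (hS : S ⊆ signGrid)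
    (h : ∀ u ∈ S, ∀ v ∈ S, |cross u v| ≤ 1) : #S ≤ 7 := by
  by_contra! h8
  obtain ⟨T, hTS, hT⟩ := exists_subset_card_eq (show 8 ≤ #S by omega)
  have hbad : ∀ T ∈ signGrid.powersetCard 8, ∃ u ∈ T, ∃ v ∈ T, 1 < |cross u v| := by decide
  obtain ⟨u, hu, v, hv, huv⟩ := hbad T (mem_powersetCard.2 ⟨hTS.trans hS, hT⟩)
  exact (h u (hTS hu) v (hTS hv)).not_gt huv

set_option maxRecDepth 100000 in
theorem card_le_five_of_abs_cross_le_one_of_abs_area_le_two {S : Finset (ℤ × ℤ)}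
    (hS : S ⊆ signGrid) (h₂ : ∀ u ∈ S, ∀ v ∈ S, |cross u v| ≤ 1)
    (h₃ : ∀ u ∈ S, ∀ v ∈ S, ∀ w ∈ S, |cross u v + cross v w + cross w u| ≤ 2) : #S ≤ 5 := by
  by_contra! h6
  obtain ⟨T, hTS, hT⟩ := exists_subset_card_eq (show 6 ≤ #S by omega)
  have hbad : ∀ T ∈ signGrid.powersetCard 6, ∃ u ∈ T, ∃ v ∈ T,
      1 < |cross u v| ∨ ∃ w ∈ T, 2 < |cross u v + cross v w + cross w u| := by decide
  obtain ⟨u, hu, v, hv, huv | ⟨w, hw, huvw⟩⟩ := hbad T (mem_powersetCard.2 ⟨hTS.trans hS, hT⟩)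
  · exact (h₂ u (hTS hu) v (hTS hv)).not_gt huv
  · exact (h₃ u (hTS hu) v (hTS hv) w (hTS hw)).not_gt huvw

section ConstantFirstRow

variable {n : ℕ} {M : Matrix (Fin 3) (Fin n) ℝ} {τ : Fin n → ℤ × ℤ}

theorem abs_cross_le_one (hM : Totally1Submodular M)
    (hτ : ∀ j, M 1 j = (τ j).1 ∧ M 2 j = (τ j).2) (j k : Fin n) :
    |cross (τ j) (τ k)| ≤ 1 := by
  have h := hM.abs_det_submatrix_le_one ![1, 2] ![j, k]
  rw [det_fin_two] at h
  simp only [submatrix_apply, cons_val_zero, cons_val_one, hτ] at h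
  unfold cross
  exact_mod_cast h

/-- The `3 × 3` minor is `c` times twice the signed area of the triangle `τ j, τ k, τ l`. -/
theorem abs_mul_abs_area_le_one (hM : Totally1Submodular M)
    (hτ : ∀ j, M 1 j = (τ j).1 ∧ M 2 j = (τ j).2) {c : ℝ} {j k l : Fin n}
    (hj : M 0 j = c) (hk : M 0 k = c) (hl : M 0 l = c) :
    |c| * |((cross (τ j) (τ k) + cross (τ k) (τ l) + cross (τ l) (τ j) : ℤ) : ℝ)| ≤ 1 := by
  have h := hM.abs_det_submatrix_le_one ![0, 1, 2] ![j, k, l]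
  rw [det_fin_three] at h
  simp only [Fin.isValue, submatrix_apply, cons_val_zero, cons_val_one, Matrix.cons_val, hτ,
    hj, hk, hl] at h
  rw [← abs_mul]
  refine le_of_eq_of_le (congrArg abs ?_) h
  push_cast [cross]
  ring

theorem card_le_seven_of_injOn (hM : Totally1Submodular M)
    (hτ : ∀ j, M 1 j = (τ j).1 ∧ M 2 j = (τ j).2) (hgrid : ∀ j, τ j ∈ signGrid)
    {G : Finset (Fin n)} (hG : Set.InjOn τ G) : #G ≤ 7 := by
  rw [← card_image_of_injOn hG]
  refine card_le_seven_of_abs_cross_le_one (image_subset_iff.2 fun j _ => hgrid j) ?_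
  simp only [forall_mem_image]
  exact fun j _ k _ => abs_cross_le_one hM hτ j k

theorem card_le_five_of_injOn (hM : Totally1Submodular M)
    (hτ : ∀ j, M 1 j = (τ j).1 ∧ M 2 j = (τ j).2) (hgrid : ∀ j, τ j ∈ signGrid)
    {G : Finset (Fin n)} (hG : Set.InjOn τ G) {c : ℝ} (hc : ∀ j ∈ G, M 0 j = c)
    (h3c : 1 < 3 * |c|) : #G ≤ 5 := by
  rw [← card_image_of_injOn hG]
  refine card_le_five_of_abs_cross_le_one_of_abs_area_le_two
    (image_subset_iff.2 fun j _ => hgrid j) ?_ ?_ <;> simp only [forall_mem_image]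
  · exact fun j _ k _ => abs_cross_le_one hM hτ j k
  · intro j hj k hk l hl
    have h := abs_mul_abs_area_le_one hM hτ (hc j hj) (hc k hk) (hc l hl)
    by_contra! h3
    have h3' : (3 : ℝ) ≤
        |((cross (τ j) (τ k) + cross (τ k) (τ l) + cross (τ l) (τ j) : ℤ) : ℝ)| := by
      exact_mod_cast h3
    nlinarith [abs_nonneg c]

end ConstantFirstRow

section SingleShift

variable {n : ℕ} {t : Fin 3 → ℝ} {A : Matrix (Fin 3) (Fin n) ℝ}

theorem card_le_twelve_of_shift_pos_zero (hA : SignEntries A) (hinj : Function.Injective Aᵀ)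
    (hM : Totally1Submodular (shiftMat t A)) (h₀ : 0 < t 0) (h₁ : t 1 = 0) (h₂ : t 2 = 0) :
    n ≤ 12 := by
  let τ : Fin n → ℤ × ℤ := fun j => (⌊A 1 j⌋, ⌊A 2 j⌋)
  have hτ : ∀ j, shiftMat t A 1 j = (τ j).1 ∧ shiftMat t A 2 j = (τ j).2 := fun j => by
    simp [τ, shiftMat, h₁, h₂, hA.intCast_floor]
  have hgrid : ∀ j, τ j ∈ signGrid := fun j => mem_product.2 ⟨hA.floor_mem 1 j, hA.floor_mem 2 j⟩
  let G : ℝ → Finset (Fin n) := fun a => univ.filter (A 0 · = a)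
  have hG : ∀ a, Set.InjOn τ (G a) := by
    intro a j hj k hk hjk
    simp only [G, coe_filter, mem_univ, true_and, Set.mem_ofPred_eq] at hj hk
    simp only [τ, Prod.mk.injEq] at hjk
    have hfloor : ∀ i, ⌊A i j⌋ = ⌊A i k⌋ → A i j = A i k := fun i h => by
      rw [← hA.intCast_floor i j, h, hA.intCast_floor]
    apply hinj
    funext i
    fin_cases i
    exacts [hj.trans hk.symm, hfloor 1 hjk.1, hfloor 2 hjk.2]
  have hc : ∀ a, ∀ j ∈ G a, shiftMat t A 0 j = t 0 + a := by simp [G, shiftMat]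
  have hn := card_filter_add_card_filter_not (s := (univ : Finset (Fin n))) (A 0 · = -1)
  have hG₀ : univ.filter (fun j => ¬ A 0 j = -1) = G 0 := by
    ext j
    rcases hA 0 j with h | h | h
    · simp [G, h]
    · simp [G, h]
    · exact absurd h (hM.ne_one_of_shift_pos h₀ j)
  rw [hG₀, card_univ, Fintype.card_fin] at hn
  have h₇ := fun a => card_le_seven_of_injOn hM hτ hgrid (hG a)
  rcases le_total (t 0) (1 / 2) with hs | hs
  · have := card_le_five_of_injOn hM hτ hgrid (hG (-1)) (hc (-1))
      (by rw [abs_of_neg (by linarith)]; linarith)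
    linarith [h₇ 0]
  · have := card_le_five_of_injOn hM hτ hgrid (hG 0) (hc 0)
      (by rw [add_zero, abs_of_pos h₀]; linarith)
    linarith [h₇ (-1)]

theorem card_le_twelve_of_shift_pos_single (hA : SignEntries A) (hinj : Function.Injective Aᵀ)
    (hM : Totally1Submodular (shiftMat t A)) {p : Fin 3} (hp : 0 < t p)
    (ht : ∀ i ≠ p, t i = 0) : n ≤ 12 := by
  let σ := Equiv.swap 0 p
  have hσ : ∀ i ≠ 0, σ i ≠ p := fun i hi => by simpa [σ, Equiv.swap_apply_eq_iff] using hi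
  refine card_le_twelve_of_shift_pos_zero (t := t ∘ σ) (A := A.submatrix σ id)
    (fun i j => hA (σ i) j) (fun j k hjk => hinj ?_) (hM.submatrix σ id) (by simpa [σ] using hp)
    (ht _ (hσ 1 one_ne_zero)) (ht _ (hσ 2 (by decide)))
  funext i
  simpa [σ] using congrFun hjk (σ i)

end SingleShift

def heller12 : Matrix (Fin 3) (Fin 12) ℤ :=
  !![-1, -1, -1, -1, -1, -1,  0,  0,  0,  0,  0,  0;
     -1, -1, -1,  0,  0,  0, -1, -1, -1,  0,  0,  0;
     -1,  0,  1, -1,  0,  1, -1,  0,  1, -1,  0,  1]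

theorem shiftedAdmissible_heller12 :
    ShiftedAdmissible 3 12 ![1 / 2, 1 / 2, 0] (heller12.map ((↑) : ℤ → ℝ)) := by
  let D : Matrix (Fin 3) (Fin 12) ℤ := of fun i j => 2 * heller12 i j + ![1, 1, 0] i
  have hD : shiftMat ![1 / 2, 1 / 2, 0] (heller12.map ((↑) : ℤ → ℝ)) =
      (2 : ℝ)⁻¹ • D.map ((↑) : ℤ → ℝ) := by
    ext i j
    fin_cases i <;> simp [shiftMat, D] <;> ring
  refine ⟨fun i => by fin_cases i <;> norm_num, fun h => by simpa using congrFun h 0,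
    fun i j => ?_, fun j k hjk => ?_, ?_⟩
  · have h := abs_le.mp ((by decide : ∀ i j, |heller12 i j| ≤ 1) i j)
    have h' : heller12 i j = -1 ∨ heller12 i j = 0 ∨ heller12 i j = 1 := by omega
    rcases h' with h | h | h <;> simp [map_apply, h]
  · have hinj : Function.Injective fun j i => heller12 i j := by decide
    exact hinj (funext fun i => Int.cast_injective (α := ℝ) (congrFun hjk i))
  rw [hD]
  refine totally1Submodular_of_three_rows (fun i j => ?_) (fun i i' j j' => ?_)
    (fun j j' j'' => ?_) <;> apply abs_det_submatrix_inv_two_smul_intCast_le_one <;> simp only [D]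
  · revert i j
    simp only [det_fin_one, submatrix_apply]
    decide
  · revert i i' j j'
    simp only [det_fin_two, submatrix_apply]
    decide
  · revert j j' j''
    simp only [det_fin_three, submatrix_apply]
    decide

theorem stmt8 :
    (∃ (t : Fin 3 → ℝ) (A : Matrix (Fin 3) (Fin 12) ℝ), ShiftedAdmissible 3 12 t A) ∧
    (∀ (n : ℕ) (t : Fin 3 → ℝ) (A : Matrix (Fin 3) (Fin n) ℝ),
      ShiftedAdmissible 3 n t A → n ≤ 12) := by
  refine ⟨⟨_, _, shiftedAdmissible_heller12⟩, fun n t A ⟨ht, hne, hA, hinj, hM⟩ => ?_⟩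
  by_cases hP : 2 ≤ #(univ.filter (0 < t ·))
  · have hn := card_le_two_pow_mul_three_pow hA hinj hM
    have h3 := card_le_univ (univ.filter (0 < t ·))
    rw [Fintype.card_fin] at h3
    interval_cases #(univ.filter (0 < t ·)) <;> omega
  obtain ⟨p, hp⟩ : ∃ p, 0 < t p := by
    by_contra! h
    exact hne (funext fun i => le_antisymm (h i) (ht i).1)
  refine card_le_twelve_of_shift_pos_single hA hinj hM hp fun i hi => ?_
  by_contra h
  have hpair : {p, i} ⊆ univ.filter (0 < t ·) := by
    simp [insert_subset_iff, hp, lt_of_le_of_ne (ht i).1 (Ne.symm h)]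
  have := card_le_card hpair
  rw [card_pair hi.symm] at this
  omega
end

section
/- For every integer m ≥ 2, the shifted Heller constant satisfies h_s(m) ≥ m(m−1)+1; that is, there exist a vector t ∈ [0,1)^m \ {0} and a matrix A ∈ {-1,0,1}^{m×n} with n = m(m−1)+1 pairwise distinct columns such that t+A is totally 1-submodular. (One can take A to be a totally unimodular matrix with m−1 rows attaining Heller's bound h(1,m−1) = m(m−1)+1, with a zero row prepended, and t = (1/m, 0, …, 0)ᵀ.) -/
open Matrix

namespace HellerAux

/-- Good matrices: all entries in `{-1,0,1}` and in each column, a nonzero value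
appears at most once. -/
def Good {k l : ℕ} (M : Matrix (Fin k) (Fin l) ℝ) : Prop :=
  (∀ i j, M i j = -1 ∨ M i j = 0 ∨ M i j = 1) ∧
  (∀ j i₁ i₂, M i₁ j ≠ 0 → M i₁ j = M i₂ j → i₁ = i₂)

lemma Good.submatrix' {k l k' l' : ℕ} {M : Matrix (Fin k) (Fin l) ℝ} (h : Good M)
    (f : Fin k' → Fin k) (hf : Function.Injective f) (g : Fin l' → Fin l) :
    Good (M.submatrix f g) :=
  ⟨fun i j => h.1 _ _, fun j i₁ i₂ h0 he => hf (h.2 (g j) (f i₁) (f i₂) h0 he)⟩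

lemma good_det : ∀ (k : ℕ) (M : Matrix (Fin k) (Fin k) ℝ), Good M → |M.det| ≤ 1 := by
  intro k
  induction k with
  | zero => intro M _; simp
  | succ n ih =>
    intro M hM
    by_cases hcol : ∃ j, ∀ i₁ i₂, M i₁ j ≠ 0 → M i₂ j ≠ 0 → i₁ = i₂
    · obtain ⟨j, hj⟩ := hcol
      rw [Matrix.det_succ_column M j]
      have habs : ∑ i, |M i j| ≤ 1 := by
        by_cases hz : ∀ i, M i j = 0
        · simp [hz]
        · push_neg at hz
          obtain ⟨i₀, hi₀⟩ := hz
          rw [Finset.sum_eq_single i₀]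
          · rcases hM.1 i₀ j with a | a | a <;> rw [a] <;> norm_num
          · intro i _ hne
            have : M i j = 0 := by
              by_contra hc
              exact hne (hj i i₀ hc hi₀)
            rw [this, abs_zero]
          · intro h; exact absurd (Finset.mem_univ i₀) h
      calc |∑ i : Fin (n+1), (-1 : ℝ) ^ (i + j : ℕ) * M i j * (M.submatrix i.succAbove j.succAbove).det|
          ≤ ∑ i : Fin (n+1), |(-1 : ℝ) ^ (i + j : ℕ) * M i j * (M.submatrix i.succAbove j.succAbove).det| :=
            Finset.abs_sum_le_sum_abs _ _
        _ = ∑ i, |M i j| * |(M.submatrix i.succAbove j.succAbove).det| := by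
            refine Finset.sum_congr rfl fun i _ => ?_
            rw [abs_mul, abs_mul, abs_pow, abs_neg, abs_one, one_pow, one_mul]
        _ ≤ ∑ i, |M i j| * 1 := by
            refine Finset.sum_le_sum fun i _ => ?_
            exact mul_le_mul_of_nonneg_left
              (ih _ (hM.submatrix' _ (Fin.succAbove_right_injective) _)) (abs_nonneg _)
        _ ≤ 1 := by simpa using habs
    · push_neg at hcol
      have hz : M.det = 0 := by
        rw [← Matrix.exists_vecMul_eq_zero_iff]
        refine ⟨fun _ => 1, ?_, ?_⟩
        · intro h
          exact one_ne_zero (congrFun h 0)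
        · funext j
          have hsum : ∑ i, M i j = 0 := by
            obtain ⟨i₁, i₂, h1, h2, hne⟩ := hcol j
            have hne' : M i₁ j ≠ M i₂ j := fun he => hne (hM.2 j i₁ i₂ h1 he)
            have hvals : (M i₁ j = 1 ∧ M i₂ j = -1) ∨ (M i₁ j = -1 ∧ M i₂ j = 1) := by
              rcases hM.1 i₁ j with a | a | a <;> rcases hM.1 i₂ j with b | b | b <;>
                simp_all
            have hothers : ∀ i, i ≠ i₁ → i ≠ i₂ → M i j = 0 := by
              intro i hi1 hi2
              by_contra h0
              rcases hM.1 i j with c | c | c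
              · rcases hvals with ⟨x, y⟩ | ⟨x, y⟩
                · exact hi2 (hM.2 j i i₂ (by rw [c]; norm_num) (by rw [c, y]))
                · exact hi1 (hM.2 j i i₁ (by rw [c]; norm_num) (by rw [c, x]))
              · exact h0 c
              · rcases hvals with ⟨x, y⟩ | ⟨x, y⟩
                · exact hi1 (hM.2 j i i₁ (by rw [c]; norm_num) (by rw [c, x]))
                · exact hi2 (hM.2 j i i₂ (by rw [c]; norm_num) (by rw [c, y]))
            have hsub : ∑ i, M i j = ∑ i ∈ ({i₁, i₂} : Finset (Fin (n + 1))), M i j := by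
              refine (Finset.sum_subset (Finset.subset_univ _) ?_).symm
              intro i _ hi
              simp only [Finset.mem_insert, Finset.mem_singleton, not_or] at hi
              exact hothers i hi.1 hi.2
            rw [hsub, Finset.sum_pair hne]
            rcases hvals with ⟨x, y⟩ | ⟨x, y⟩ <;> rw [x, y] <;> ring
          simp only [Matrix.vecMul, dotProduct, one_mul, Pi.zero_apply]
          exact hsum
      rw [hz]; norm_num

/-! ### The Heller matrix -/

def aIdx (d j : ℕ) : ℕ := j / d

def bIdx (d j : ℕ) : ℕ := if j % d < j / d then j % d else j % d + 1

lemma aIdx_ne_bIdx (d j : ℕ) : aIdx d j ≠ bIdx d j := by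
  unfold aIdx bIdx; split <;> omega

noncomputable def Acol (d j i : ℕ) : ℝ :=
  (if i = aIdx d j + 1 then 1 else 0) - (if i = bIdx d j + 1 then 1 else 0)

lemma Acol_eq_one_iff (d j i : ℕ) : Acol d j i = 1 ↔ i = aIdx d j + 1 := by
  have h := aIdx_ne_bIdx d j
  unfold Acol
  split_ifs with p q q <;> norm_num <;> omega

lemma Acol_eq_neg_one_iff (d j i : ℕ) : Acol d j i = -1 ↔ i = bIdx d j + 1 := by
  have h := aIdx_ne_bIdx d j
  unfold Acol
  split_ifs with p q q <;> norm_num <;> omega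

lemma Acol_sign (d j i : ℕ) : Acol d j i = -1 ∨ Acol d j i = 0 ∨ Acol d j i = 1 := by
  unfold Acol
  split_ifs <;> norm_num

lemma Acol_zero (d j : ℕ) : Acol d j 0 = 0 := by
  unfold Acol
  rw [if_neg (by omega), if_neg (by omega)]
  ring

lemma aIdx_lt {d j : ℕ} (hd : 0 < d) (hj : j < (d + 1) * d) : aIdx d j < d + 1 := by
  unfold aIdx
  exact (Nat.div_lt_iff_lt_mul hd).mpr hj

lemma bIdx_lt {d j : ℕ} (hd : 0 < d) : bIdx d j < d + 1 := by
  have := Nat.mod_lt j hd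
  unfold bIdx; split <;> omega

noncomputable def Amat (d : ℕ) : Matrix (Fin (d + 1)) (Fin ((d + 1) * d + 1)) ℝ :=
  Matrix.of fun i j => if (j : ℕ) < (d + 1) * d then Acol d j i else 0

lemma Amat_row_zero (d : ℕ) (j : Fin ((d + 1) * d + 1)) : Amat d 0 j = 0 := by
  unfold Amat
  simp only [Matrix.of_apply]
  split
  · exact Acol_zero d j
  · rfl

lemma good_Amat (d : ℕ) : Good (Amat d) := by
  constructor
  · intro i j
    unfold Amat
    simp only [Matrix.of_apply]
    split
    · exact Acol_sign d j i
    · right; left; rfl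
  · intro j i₁ i₂ h0 he
    unfold Amat at h0 he
    simp only [Matrix.of_apply] at h0 he
    split at h0
    · split at he
      · rcases Acol_sign d j i₁ with c | c | c
        · have e1 := (Acol_eq_neg_one_iff d j i₁).mp c
          have e2 := (Acol_eq_neg_one_iff d j i₂).mp (by rw [← he, c])
          exact Fin.ext (by omega)
        · exact absurd c h0
        · have e1 := (Acol_eq_one_iff d j i₁).mp c
          have e2 := (Acol_eq_one_iff d j i₂).mp (by rw [← he, c])
          exact Fin.ext (by omega)
      · omega
    · exact absurd rfl h0

lemma exists_nonzero {d : ℕ} (hd : 0 < d) {j : ℕ} (hj : j < (d + 1) * d) :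
    ∃ i : Fin (d + 1), Acol d j i ≠ 0 := by
  by_cases ha : aIdx d j < d
  · refine ⟨⟨aIdx d j + 1, by omega⟩, ?_⟩
    have : Acol d j (aIdx d j + 1) = 1 := (Acol_eq_one_iff d j _).mpr rfl
    rw [this]; norm_num
  · have ha' : aIdx d j = d := by have := aIdx_lt hd hj; omega
    have hb : bIdx d j < d := by
      have := bIdx_lt (j := j) hd
      have := aIdx_ne_bIdx d j
      omega
    refine ⟨⟨bIdx d j + 1, by omega⟩, ?_⟩
    have : Acol d j (bIdx d j + 1) = -1 := (Acol_eq_neg_one_iff d j _).mpr rfl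
    rw [this]; norm_num

lemma col_inj {d : ℕ} (hd : 0 < d) {j₁ j₂ : ℕ} (h1 : j₁ < (d + 1) * d)
    (h2 : j₂ < (d + 1) * d) (he : ∀ i : Fin (d + 1), Acol d j₁ i = Acol d j₂ i) :
    j₁ = j₂ := by
  have ha : aIdx d j₁ = aIdx d j₂ := by
    rcases lt_or_ge (aIdx d j₁) d with hA | hA
    · have v1 : Acol d j₁ (aIdx d j₁ + 1) = 1 := (Acol_eq_one_iff d j₁ _).mpr rfl
      have := he ⟨aIdx d j₁ + 1, by omega⟩
      simp only at this
      rw [v1] at this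
      have := (Acol_eq_one_iff d j₂ _).mp this.symm
      omega
    · rcases lt_or_ge (aIdx d j₂) d with hB | hB
      · have v2 : Acol d j₂ (aIdx d j₂ + 1) = 1 := (Acol_eq_one_iff d j₂ _).mpr rfl
        have := he ⟨aIdx d j₂ + 1, by omega⟩
        simp only at this
        rw [v2] at this
        have := (Acol_eq_one_iff d j₁ _).mp this
        omega
      · have := aIdx_lt hd h1
        have := aIdx_lt hd h2
        omega
  have hb : bIdx d j₁ = bIdx d j₂ := by
    rcases lt_or_ge (bIdx d j₁) d with hA | hA
    · have v1 : Acol d j₁ (bIdx d j₁ + 1) = -1 := (Acol_eq_neg_one_iff d j₁ _).mpr rfl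
      have := he ⟨bIdx d j₁ + 1, by omega⟩
      simp only at this
      rw [v1] at this
      have := (Acol_eq_neg_one_iff d j₂ _).mp this.symm
      omega
    · rcases lt_or_ge (bIdx d j₂) d with hB | hB
      · have v2 : Acol d j₂ (bIdx d j₂ + 1) = -1 := (Acol_eq_neg_one_iff d j₂ _).mpr rfl
        have := he ⟨bIdx d j₂ + 1, by omega⟩
        simp only at this
        rw [v2] at this
        have := (Acol_eq_neg_one_iff d j₁ _).mp this
        omega
      · have := bIdx_lt (j := j₁) hd
        have := bIdx_lt (j := j₂) hd
        omega
  unfold aIdx at ha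
  have hmod : j₁ % d = j₂ % d := by
    unfold bIdx at hb
    split_ifs at hb <;> omega
  calc j₁ = d * (j₁ / d) + j₁ % d := (Nat.div_add_mod j₁ d).symm
    _ = d * (j₂ / d) + j₂ % d := by rw [ha, hmod]
    _ = j₂ := Nat.div_add_mod j₂ d

lemma Amat_transpose_inj {d : ℕ} (hd : 0 < d) :
    Function.Injective (Amat d).transpose := by
  intro j₁ j₂ h
  have h' : ∀ i, Amat d i j₁ = Amat d i j₂ := fun i => congrFun h i
  unfold Amat at h'
  simp only [Matrix.of_apply] at h'
  have hlt : j₁.val < (d + 1) * d + 1 := j₁.isLt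
  have hlt2 : j₂.val < (d + 1) * d + 1 := j₂.isLt
  rcases lt_or_ge j₁.val ((d + 1) * d) with hj1 | hj1 <;>
    rcases lt_or_ge j₂.val ((d + 1) * d) with hj2 | hj2
  · refine Fin.ext (col_inj hd hj1 hj2 fun i => ?_)
    have := h' i
    rwa [if_pos hj1, if_pos hj2] at this
  · obtain ⟨i, hi⟩ := exists_nonzero hd hj1
    have := h' i
    rw [if_pos hj1, if_neg (by omega)] at this
    exact absurd this hi
  · obtain ⟨i, hi⟩ := exists_nonzero hd hj2
    have := h' i
    rw [if_neg (by omega), if_pos hj2] at this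
    exact absurd this.symm hi
  · exact Fin.ext (by omega)

end HellerAux

open HellerAux

theorem stmt9 (m : ℕ) (hm : 2 ≤ m) :
    ∃ (t : Fin m → ℝ) (A : Matrix (Fin m) (Fin (m * (m - 1) + 1)) ℝ),
      ShiftedAdmissible m (m * (m - 1) + 1) t A := by
  obtain ⟨d, rfl⟩ : ∃ d, m = d + 1 := ⟨m - 1, by omega⟩
  have hd : 0 < d := by omega
  have hd1 : (0 : ℝ) < (d : ℝ) + 1 := by positivity
  set t : Fin (d + 1) → ℝ := fun i => if i = 0 then 1 / ((d : ℝ) + 1) else 0 with ht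
  refine ⟨t, Amat d, ?_, ?_, ?_, Amat_transpose_inj hd, ?_⟩
  · intro i
    constructor
    · simp only [ht]
      split <;> positivity
    · simp only [ht]
      split
      · rw [div_lt_one hd1]
        have : (1 : ℝ) ≤ (d : ℝ) := by exact_mod_cast hd
        linarith
      · norm_num
  · intro h
    have := congrFun h 0
    simp only [ht, if_pos rfl, Pi.zero_apply] at this
    have : (1 : ℝ) / ((d : ℝ) + 1) ≠ 0 := by positivity
    simp_all
  · intro i j
    exact (good_Amat d).1 i j
  · intro k f g
    match k with
    | 0 => simp
    | k + 1 =>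
      by_cases h0 : ∃ i₀, f i₀ = (0 : Fin (d + 1))
      · obtain ⟨i₀, hi₀⟩ := h0
        set N := (shiftMat t (Amat d)).submatrix f g with hN
        have hrow : ∀ j, N i₀ j = 1 / ((d : ℝ) + 1) := by
          intro j
          simp [hN, shiftMat, hi₀, ht, Amat_row_zero]
        have hk : k + 1 ≤ d + 1 := by
          have := Fintype.card_le_of_embedding f
          simpa using this
        have hminor : ∀ j : Fin (k + 1),
            |(N.submatrix i₀.succAbove j.succAbove).det| ≤ 1 := by
          intro j
          have heq : N.submatrix i₀.succAbove j.succAbove =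
              (Amat d).submatrix (f ∘ i₀.succAbove) (g ∘ j.succAbove) := by
            ext a b
            simp only [hN, Matrix.submatrix_apply, shiftMat, Matrix.of_apply,
              Function.comp_apply]
            have hne : f (i₀.succAbove a) ≠ 0 := by
              intro hc
              exact (Fin.succAbove_ne i₀ a) (f.injective (hc.trans hi₀.symm))
            rw [ht]
            simp only [if_neg hne, zero_add]
          rw [heq]
          exact good_det k _ ((good_Amat d).submatrix' _
            (f.injective.comp Fin.succAbove_right_injective) _)
        rw [Matrix.det_succ_row N i₀]
        calc |∑ j : Fin (k+1), (-1 : ℝ) ^ (i₀ + j : ℕ) * N i₀ j *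
                (N.submatrix i₀.succAbove j.succAbove).det|
            ≤ ∑ j : Fin (k+1), |(-1 : ℝ) ^ (i₀ + j : ℕ) * N i₀ j *
                (N.submatrix i₀.succAbove j.succAbove).det| :=
              Finset.abs_sum_le_sum_abs _ _
          _ = ∑ j, |N i₀ j| * |(N.submatrix i₀.succAbove j.succAbove).det| := by
              refine Finset.sum_congr rfl fun j _ => ?_
              rw [abs_mul, abs_mul, abs_pow, abs_neg, abs_one, one_pow, one_mul]
          _ ≤ ∑ j : Fin (k + 1), (1 / ((d : ℝ) + 1)) * 1 := by
              refine Finset.sum_le_sum fun j _ => ?_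
              rw [hrow j, abs_of_nonneg (by positivity)]
              exact mul_le_mul_of_nonneg_left (hminor j) (by positivity)
          _ = (k + 1 : ℝ) * (1 / ((d : ℝ) + 1)) := by
              rw [Finset.sum_const, Finset.card_univ, Fintype.card_fin, nsmul_eq_mul]
              push_cast; ring
          _ ≤ 1 := by
              rw [mul_one_div, div_le_one hd1]
              exact_mod_cast hk
      · push_neg at h0
        have heq : (shiftMat t (Amat d)).submatrix f g = (Amat d).submatrix f g := by
          ext a b
          simp only [Matrix.submatrix_apply, shiftMat, Matrix.of_apply, ht,
            if_neg (h0 a), zero_add]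
        rw [heq]
        exact good_det (k + 1) _ ((good_Amat d).submatrix' _ f.injective _)
end

section
/- Let A ∈ {-1,0,1}^{m×n} be a matrix with pairwise distinct columns and let t ∈ [0,1)^m be such that Δ_1(t+A) ≤ 1 and Δ_2(t+A) ≤ 1. Then for every subset E ⊆ {1,…,m}, at most two columns of A have support equal to E, where the support of a vector y ∈ ℝ^m is supp(y) = {j ∈ {1,…,m} : y_j ≠ 0}. -/
open Matrix

/-!
Since `0 ≤ t i` and `|t i + A i j| ≤ 1`, an entry `1` of `A` forces `t i = 0`; so on rows with
`t i > 0` a column with support `E` is `-1` on `E` and `0` off it. Two distinct columns with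
support `E` differ in some row, where they read `1` and `-1`, and the `2 × 2` minors of `t + A`
through that row make the two columns opposite on every row with `t i = 0`. A third column with
support `E` is then opposite to the first one on those rows, hence equal to the second.
-/

namespace MinorsLE

variable {m n : ℕ} {M : Matrix (Fin m) (Fin n) ℝ} {c : ℝ}

theorem abs_apply_le (h : MinorsLE 1 M c) (i : Fin m) (j : Fin n) : |M i j| ≤ c := by
  have := h (Function.Embedding.oneEmbeddingEquiv.symm i)
    (Function.Embedding.oneEmbeddingEquiv.symm j)
  rwa [det_fin_one] at this

theorem abs_det_two_le (h : MinorsLE 2 M c) {i i' : Fin m} {j j' : Fin n} (hi : i ≠ i')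
    (hj : j ≠ j') : |M i j * M i' j' - M i j' * M i' j| ≤ c := by
  simpa [det_fin_two, Function.Embedding.embFinTwo_apply_zero,
    Function.Embedding.embFinTwo_apply_one] using
    h (Function.Embedding.embFinTwo hi) (Function.Embedding.embFinTwo hj)

end MinorsLE

section ShiftedSignMatrix

variable {m n : ℕ} {A : Matrix (Fin m) (Fin n) ℝ} {t : Fin m → ℝ}

theorem shift_eq_zero_of_apply_eq_one (ht : ∀ i, 0 ≤ t i) (h1 : MinorsLE 1 (shiftMat t A) 1)
    {i : Fin m} {j : Fin n} (hij : A i j = 1) : t i = 0 := by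
  have := (abs_le.mp (h1.abs_apply_le i j)).2
  simp only [shiftMat, of_apply, hij] at this
  linarith [ht i]

theorem apply_eq_neg_one_of_shift_pos (hA : SignEntries A) (ht : ∀ i, 0 ≤ t i)
    (h1 : MinorsLE 1 (shiftMat t A) 1) {i : Fin m} {j : Fin n} (hti : 0 < t i)
    (hij : A i j ≠ 0) : A i j = -1 := by
  rcases hA i j with h | h | h
  · exact h
  · exact absurd h hij
  · exact absurd (shift_eq_zero_of_apply_eq_one ht h1 h) hti.ne'

theorem exists_apply_eq_one_and_eq_neg_one (hA : SignEntries A)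
    (hcols : Function.Injective Aᵀ) {j j' : Fin n} (hne : j ≠ j')
    (hsupp : ∀ i, A i j ≠ 0 ↔ A i j' ≠ 0) :
    ∃ i₀, (A i₀ j = 1 ∧ A i₀ j' = -1) ∨ (A i₀ j' = 1 ∧ A i₀ j = -1) := by
  obtain ⟨i₀, hi₀⟩ : ∃ i₀, A i₀ j ≠ A i₀ j' := by
    by_contra! h
    exact hne (hcols (funext h))
  refine ⟨i₀, ?_⟩
  have := hsupp i₀
  rcases hA i₀ j with h | h | h <;> rcases hA i₀ j' with h' | h' | h' <;> simp_all

theorem apply_eq_neg_of_shift_eq_zero_of_pivot (hA : SignEntries A) (ht : ∀ i, 0 ≤ t i)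
    (h1 : MinorsLE 1 (shiftMat t A) 1) (h2 : MinorsLE 2 (shiftMat t A) 1) {j j' : Fin n}
    (hne : j ≠ j') (hsupp : ∀ i, A i j ≠ 0 ↔ A i j' ≠ 0) {i₀ : Fin m} (hj : A i₀ j = 1)
    (hj' : A i₀ j' = -1) {i : Fin m} (hti : t i = 0) : A i j' = -A i j := by
  by_cases hii : i = i₀
  · subst hii
    rw [hj, hj']
  have ht₀ := shift_eq_zero_of_apply_eq_one ht h1 hj
  have hdet := abs_le.mp (h2.abs_det_two_le (Ne.symm hii) hne)
  simp only [shiftMat, of_apply, hj, hj', ht₀, hti, zero_add] at hdet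
  have := hsupp i
  rcases hA i j with h | h | h <;> rcases hA i j' with h' | h' | h' <;>
    simp_all <;> linarith

theorem apply_eq_neg_of_shift_eq_zero (hA : SignEntries A) (hcols : Function.Injective Aᵀ)
    (ht : ∀ i, 0 ≤ t i) (h1 : MinorsLE 1 (shiftMat t A) 1) (h2 : MinorsLE 2 (shiftMat t A) 1)
    {j j' : Fin n} (hne : j ≠ j') (hsupp : ∀ i, A i j ≠ 0 ↔ A i j' ≠ 0) {i : Fin m}
    (hti : t i = 0) : A i j' = -A i j := by
  obtain ⟨i₀, ⟨hj, hj'⟩ | ⟨hj', hj⟩⟩ := exists_apply_eq_one_and_eq_neg_one hA hcols hne hsupp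
  · exact apply_eq_neg_of_shift_eq_zero_of_pivot hA ht h1 h2 hne hsupp hj hj' hti
  · have := apply_eq_neg_of_shift_eq_zero_of_pivot hA ht h1 h2 hne.symm
      (fun i => (hsupp i).symm) hj' hj hti
    linarith

theorem col_eq_of_support_eq (hA : SignEntries A) (hcols : Function.Injective Aᵀ)
    (ht : ∀ i, 0 ≤ t i) (h1 : MinorsLE 1 (shiftMat t A) 1) (h2 : MinorsLE 2 (shiftMat t A) 1)
    {j₁ j₂ j₃ : Fin n} (h₁₂ : j₁ ≠ j₂) (h₁₃ : j₁ ≠ j₃)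
    (hsupp₂ : ∀ i, A i j₁ ≠ 0 ↔ A i j₂ ≠ 0) (hsupp₃ : ∀ i, A i j₁ ≠ 0 ↔ A i j₃ ≠ 0) :
    Aᵀ j₂ = Aᵀ j₃ := by
  funext i
  simp only [transpose_apply]
  rcases (ht i).eq_or_lt with hti | hti
  · rw [apply_eq_neg_of_shift_eq_zero hA hcols ht h1 h2 h₁₂ hsupp₂ hti.symm,
      apply_eq_neg_of_shift_eq_zero hA hcols ht h1 h2 h₁₃ hsupp₃ hti.symm]
  · by_cases hi : A i j₁ = 0
    · have h₂ : A i j₂ = 0 := by simpa [hi] using hsupp₂ i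
      have h₃ : A i j₃ = 0 := by simpa [hi] using hsupp₃ i
      rw [h₂, h₃]
    · rw [apply_eq_neg_one_of_shift_pos hA ht h1 hti ((hsupp₂ i).mp hi),
        apply_eq_neg_one_of_shift_pos hA ht h1 hti ((hsupp₃ i).mp hi)]

end ShiftedSignMatrix

theorem stmt10 (m n : ℕ) (A : Matrix (Fin m) (Fin n) ℝ) (t : Fin m → ℝ)
    (hA : SignEntries A) (hcols : Function.Injective A.transpose)
    (ht : ∀ i, 0 ≤ t i ∧ t i < 1)
    (h1 : MinorsLE 1 (shiftMat t A) 1) (h2 : MinorsLE 2 (shiftMat t A) 1)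
    (E : Set (Fin m)) :
    Set.ncard {j : Fin n | ∀ i, A i j ≠ 0 ↔ i ∈ E} ≤ 2 := by
  by_contra! hc
  obtain ⟨j₁, hj₁, j₂, hj₂, j₃, hj₃, h₁₂, h₁₃, h₂₃⟩ :=
    (Set.two_lt_ncard (Set.toFinite _)).mp hc
  simp only [Set.mem_ofPred_eq] at hj₁ hj₂ hj₃
  exact h₂₃ <| hcols <| col_eq_of_support_eq hA hcols (fun i => (ht i).1) h1 h2 h₁₂ h₁₃
    (fun i => (hj₁ i).trans (hj₂ i).symm) (fun i => (hj₁ i).trans (hj₃ i).symm)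
end

section
/- Let S be a Sauer Matrix of size 4 of type (0,4), i.e., every nonzero entry of S equals −1. If r ∈ [0,1)^4 is such that r+S is totally 1-submodular, then r = (1/2, 1/2, 1/2, 1/2)ᵀ. -/
open Matrix

/-- A Sauer Matrix of size `k`: a `{-1,0,1}`-matrix of format `k × 2^k` having, for each
subset `E ⊆ {1,…,k}`, exactly one column whose support equals `E`. -/
def IsSauer {k : ℕ} (S : Matrix (Fin k) (Fin (2 ^ k)) ℝ) : Prop :=
  SignEntries S ∧ ∀ E : Set (Fin k), ∃! j : Fin (2 ^ k), ∀ i, S i j ≠ 0 ↔ i ∈ E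

/-! Since all nonzero entries of `S` are `-1`, the column of `S` with support `E` is `-𝟙_E`.
The minor of `r + S` on the columns with supports `{j}ᶜ` has determinant `∑ rᵢ - 3`, so
`∑ rᵢ ≥ 2`. The minor on the columns with supports `{j}` (`j ≠ i`) and `{i}ᶜ` has determinant
`2 rᵢ`: subtracting its `i`-th column from the others makes `rᵢ` the only nonzero entry of
row `i`, and the complementary `3 × 3` minor is `det (J - I) = 2`. Hence every `rᵢ ≤ 1/2`,
and all four are equal to `1/2`. -/

lemma Totally1Submodular.abs_det_submatrix_le {m n : ℕ} {A : Matrix (Fin m) (Fin n) ℝ}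
    (hA : Totally1Submodular A) (c : Fin m → Fin n) : |(A.submatrix id c).det| ≤ 1 := by
  by_cases hc : Function.Injective c
  · exact hA m (Function.Embedding.refl _) ⟨c, hc⟩
  · obtain ⟨j, j', hcj, hjj'⟩ : ∃ j j', c j = c j' ∧ j ≠ j' := by
      simpa [Function.Injective] using hc
    rw [det_zero_of_column_eq hjj' fun i => by simp [hcj], abs_zero]
    exact zero_le_one

lemma IsSauer.exists_col_eq_neg_indicator {k : ℕ} {S : Matrix (Fin k) (Fin (2 ^ k)) ℝ}
    (hS : IsSauer S) (hS1 : ∀ i j, S i j ≠ 1) (E : Finset (Fin k)) :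
    ∃ j, ∀ i, S i j = if i ∈ E then -1 else 0 := by
  obtain ⟨j, hj, -⟩ := hS.2 E
  refine ⟨j, fun i => ?_⟩
  split_ifs with hi
  · rcases hS.1 i j with h | h | h
    · exact h
    · exact absurd h ((hj i).2 hi)
    · exact absurd h (hS1 i j)
  · exact not_not.1 (mt (hj i).1 hi)

lemma submatrix_shiftMat_of_neg_indicator {m n : ℕ} (r : Fin m → ℝ)
    {S : Matrix (Fin m) (Fin n) ℝ} {E : Fin m → Finset (Fin m)} {c : Fin m → Fin n}
    (hc : ∀ j i, S i (c j) = if i ∈ E j then -1 else 0) :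
    (shiftMat r S).submatrix id c = of fun i j => r i - if i ∈ E j then 1 else 0 := by
  ext i j
  simp only [submatrix_apply, shiftMat, of_apply, id_eq, hc]
  split_ifs <;> ring

lemma det_sub_indicator_compl_singleton (r : Fin 4 → ℝ) :
    (of fun i j : Fin 4 => r i - if i ∈ ({j}ᶜ : Finset (Fin 4)) then 1 else 0).det =
      r 0 + r 1 + r 2 + r 3 - 3 := by
  simp [det_succ_row_zero, Fin.sum_univ_succ, Fin.succAbove]
  ring

lemma det_sub_indicator_singleton_or_compl (r : Fin 4 → ℝ) (i : Fin 4) :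
    (of fun l j : Fin 4 =>
      r l - if l ∈ (if j = i then {i}ᶜ else {j} : Finset (Fin 4)) then 1 else 0).det =
      2 * r i := by
  fin_cases i <;> simp [det_succ_row_zero, Fin.sum_univ_succ, Fin.succAbove] <;> ring

theorem stmt13_general (S : Matrix (Fin 4) (Fin (2 ^ 4)) ℝ) (hS : IsSauer S)
    (htype : ∀ i j, S i j ≠ 1)
    (r : Fin 4 → ℝ)
    (hsub : Totally1Submodular (shiftMat r S)) :
    r = ![1/2, 1/2, 1/2, 1/2] := by
  choose c hc using hS.exists_col_eq_neg_indicator htype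
  have hsum : |r 0 + r 1 + r 2 + r 3 - 3| ≤ 1 := by
    rw [← det_sub_indicator_compl_singleton,
      ← submatrix_shiftMat_of_neg_indicator r fun j => hc _]
    exact hsub.abs_det_submatrix_le _
  have hhalf : ∀ i, r i ≤ 1 / 2 := fun i => by
    have h : |2 * r i| ≤ 1 := by
      rw [← det_sub_indicator_singleton_or_compl,
        ← submatrix_shiftMat_of_neg_indicator r fun j => hc _]
      exact hsub.abs_det_submatrix_le _
    linarith [(abs_le.1 h).2]
  ext i
  fin_cases i <;> simp <;> linarith [hhalf 0, hhalf 1, hhalf 2, hhalf 3, (abs_le.1 hsum).1]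

theorem stmt13 (S : Matrix (Fin 4) (Fin (2 ^ 4)) ℝ) (hS : IsSauer S)
    (htype : ∀ i j, S i j ≠ 1)
    (r : Fin 4 → ℝ) (hr : ∀ i, 0 ≤ r i ∧ r i < 1)
    (hsub : Totally1Submodular (shiftMat r S)) :
    r = ![1/2, 1/2, 1/2, 1/2] :=
  stmt13_general S hS htype r hsub
end

section
/- Let S be a Sauer Matrix of size 4 of type (1,3), i.e., the first row of S contains at least one entry equal to 1 and rows 2, 3, 4 contain no entry equal to 1. If r ∈ [0,1)^4 is such that r+S is totally 1-submodular, then r = (0, 1/2, 1/2, 1/2)ᵀ. -/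
/-!
The `1 × 1` minor at a column whose first entry is `1` gives `|r₀ + 1| ≤ 1`, so `r₀ = 0`.
Now fix a row `i ≠ 0`, let `j, k` be the two other nonzero rows, and look at columns whose
support meets `{i}` in a fixed set `T`: on them row `i` of `r + S` is the constant
`x = r_i - [i ∈ T]`. Let `b, c = ±1` be the first entries of the columns with supports
`{0, j} ∪ T` and `{0, k} ∪ T`. The `2 × 2` minor of these two columns on rows `0, i` is
`x (b - c)`, and the `4 × 4` minor on the columns `T`, `{0, j} ∪ T`, `{0, k} ∪ T`, `{j, k} ∪ T`
is `x (b + c)`, since the `r_j`, `r_k` parts of rows `j, k` are multiples of row `i`.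
One of `b - c`, `b + c` is `±2`, hence `|x| ≤ 1/2`; taking `T = ∅` and `T = {i}` gives
`|r_i| ≤ 1/2` and `|r_i - 1| ≤ 1/2`, so `r_i = 1/2`.
-/

open Matrix

namespace Totally1Submodular

variable {m n : ℕ} {A : Matrix (Fin m) (Fin n) ℝ}

theorem abs_det_submatrix_le_s14 (hA : Totally1Submodular A) {k : ℕ} (f : Fin k → Fin m)
    (g : Fin k → Fin n) : |(A.submatrix f g).det| ≤ 1 := by
  by_cases hf : Function.Injective f
  · by_cases hg : Function.Injective g
    · exact hA k ⟨f, hf⟩ ⟨g, hg⟩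
    · obtain ⟨a, b, hab, hne⟩ : ∃ a b, g a = g b ∧ a ≠ b := by
        simpa [Function.Injective] using hg
      have : (A.submatrix f g).det = 0 := det_zero_of_column_eq hne fun i => by simp [hab]
      simp [this]
  · obtain ⟨a, b, hab, hne⟩ : ∃ a b, f a = f b ∧ a ≠ b := by
      simpa [Function.Injective] using hf
    have : (A.submatrix f g).det = 0 := det_zero_of_row_eq hne (by ext; simp [hab])
    simp [this]

theorem abs_apply_le (hA : Totally1Submodular A) (i : Fin m) (j : Fin n) : |A i j| ≤ 1 := by
  simpa using hA.abs_det_submatrix_le_s14 (fun _ : Fin 1 => i) (fun _ => j)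

end Totally1Submodular

namespace IsSauer

variable {n : ℕ} {S : Matrix (Fin n) (Fin (2 ^ n)) ℝ} {E : Set (Fin n)} {i : Fin n}

noncomputable def col (hS : IsSauer S) (E : Set (Fin n)) : Fin (2 ^ n) :=
  (hS.2 E).exists.choose

theorem apply_col_ne_zero_iff (hS : IsSauer S) : S i (hS.col E) ≠ 0 ↔ i ∈ E :=
  (hS.2 E).exists.choose_spec i

theorem apply_col_of_notMem (hS : IsSauer S) (hi : i ∉ E) : S i (hS.col E) = 0 :=
  not_not.1 (mt hS.apply_col_ne_zero_iff.1 hi)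

theorem apply_col_of_mem (hS : IsSauer S) (hi : i ∈ E) :
    S i (hS.col E) = 1 ∨ S i (hS.col E) = -1 := by
  rcases hS.1 i (hS.col E) with h | h | h
  · exact .inr h
  · exact absurd h (hS.apply_col_ne_zero_iff.2 hi)
  · exact .inl h

theorem apply_col_of_forall_ne_one (hS : IsSauer S) (hi : ∀ c, S i c ≠ 1) :
    S i (hS.col E) = -E.indicator 1 i := by
  by_cases hiE : i ∈ E
  · simpa [hiE, hi] using hS.apply_col_of_mem hiE
  · simp [hiE, hS.apply_col_of_notMem hiE]

theorem shiftMat_apply_col_of_forall_ne_one (hS : IsSauer S) (r : Fin n → ℝ)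
    (hi : ∀ c, S i c ≠ 1) (E : Set (Fin n)) :
    shiftMat r S i (hS.col E) = r i - E.indicator 1 i := by
  simp [shiftMat, hS.apply_col_of_forall_ne_one hi, sub_eq_add_neg]

end IsSauer

theorem Set.indicator_insert_of_ne {α M : Type*} [Zero M] {s : Set α} {f : α → M} {a b : α}
    (h : a ≠ b) : (insert b s).indicator f a = s.indicator f a := by
  classical
  simp [Set.indicator_apply, h]

theorem det_sign_block (b c x y z : ℝ) :
    !![0, b, c, 0; x, x, x, x; y, y - 1, y, y - 1; z, z, z - 1, z - 1].det = x * (b + c) := by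
  rw [det_succ_row_zero]
  simp [Fin.sum_univ_succ, det_fin_three, Fin.succAbove]
  ring

theorem abs_le_half_of_abs_mul_sub_add_le {x b c : ℝ} (hb : b = 1 ∨ b = -1) (hc : c = 1 ∨ c = -1)
    (hsub : |x * (b - c)| ≤ 1) (hadd : |x * (b + c)| ≤ 1) : |x| ≤ 1 / 2 := by
  rcases hb with rfl | rfl <;> rcases hc with rfl | rfl <;>
    norm_num [abs_mul] at hsub hadd ⊢ <;> linarith

namespace IsSauer

variable {n : ℕ} {S : Matrix (Fin n) (Fin (2 ^ n)) ℝ}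

theorem abs_sub_indicator_le_half (hS : IsSauer S) {r : Fin n → ℝ}
    (hsub : Totally1Submodular (shiftMat r S)) {p i j k : Fin n} (hrp : r p = 0)
    (hi : ∀ c, S i c ≠ 1) (hj : ∀ c, S j c ≠ 1) (hk : ∀ c, S k c ≠ 1)
    (hpi : p ≠ i) (hpj : p ≠ j) (hpk : p ≠ k) (hij : i ≠ j) (hik : i ≠ k) (hjk : j ≠ k)
    {T : Set (Fin n)} (hpT : p ∉ T) (hjT : j ∉ T) (hkT : k ∉ T) :
    |r i - T.indicator 1 i| ≤ 1 / 2 := by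
  set x := r i - T.indicator 1 i
  set Cj := hS.col (insert p (insert j T))
  set Ck := hS.col (insert p (insert k T))
  have hb : S p Cj = 1 ∨ S p Cj = -1 := hS.apply_col_of_mem (by simp)
  have hc : S p Ck = 1 ∨ S p Ck = -1 := hS.apply_col_of_mem (by simp)
  have hrow_p (c) : shiftMat r S p c = S p c := by simp [shiftMat, hrp]
  have hxj : shiftMat r S i Cj = x := by
    simp [Cj, x, hS.shiftMat_apply_col_of_forall_ne_one r hi, Set.indicator_insert_of_ne,
      hpi.symm, hij]
  have hxk : shiftMat r S i Ck = x := by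
    simp [Ck, x, hS.shiftMat_apply_col_of_forall_ne_one r hi, Set.indicator_insert_of_ne,
      hpi.symm, hik]
  have h2 : |x * (S p Cj - S p Ck)| ≤ 1 := by
    have h := hsub.abs_det_submatrix_le_s14 ![p, i] ![Cj, Ck]
    rw [det_fin_two] at h
    simp only [hxj, hxk, hrow_p, cons_val_zero, cons_val_one, submatrix_apply] at h
    convert h using 2
    ring
  have h4 : |x * (S p Cj + S p Ck)| ≤ 1 := by
    have h := hsub.abs_det_submatrix_le_s14 ![p, i, j, k]
      ![hS.col T, Cj, Ck, hS.col (insert j (insert k T))]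
    have e4 : (shiftMat r S).submatrix ![p, i, j, k]
        ![hS.col T, Cj, Ck, hS.col (insert j (insert k T))] =
        !![0, S p Cj, S p Ck, 0; x, x, x, x; r j, r j - 1, r j, r j - 1;
          r k, r k, r k - 1, r k - 1] := by
      ext a b
      fin_cases a <;> fin_cases b <;>
        simp [hS.shiftMat_apply_col_of_forall_ne_one r hi,
          hS.shiftMat_apply_col_of_forall_ne_one r hj,
          hS.shiftMat_apply_col_of_forall_ne_one r hk, hrow_p, Set.indicator_insert_of_ne,
          hS.apply_col_of_notMem, hpT, hjT, hkT, Cj, Ck, x, hpj, hpk, hij, hik, hjk, hpi.symm,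
          hpj.symm, hpk.symm, hjk.symm]
    rwa [e4, det_sign_block] at h
  exact abs_le_half_of_abs_mul_sub_add_le hb hc h2 h4

theorem eq_half_of_totally1Submodular_shiftMat (hS : IsSauer S) {r : Fin n → ℝ}
    (hsub : Totally1Submodular (shiftMat r S)) {p i j k : Fin n} (hrp : r p = 0)
    (hi : ∀ c, S i c ≠ 1) (hj : ∀ c, S j c ≠ 1) (hk : ∀ c, S k c ≠ 1)
    (hpi : p ≠ i) (hpj : p ≠ j) (hpk : p ≠ k) (hij : i ≠ j) (hik : i ≠ k) (hjk : j ≠ k) :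
    r i = 1 / 2 := by
  have hle := hS.abs_sub_indicator_le_half hsub hrp hi hj hk hpi hpj hpk hij hik hjk
    (T := ∅) (by simp) (by simp) (by simp)
  have hge := hS.abs_sub_indicator_le_half hsub hrp hi hj hk hpi hpj hpk hij hik hjk
    (T := {i}) (by simpa using hpi) (by simpa using hij.symm) (by simpa using hik.symm)
  simp only [Set.indicator_empty, sub_zero] at hle
  rw [Set.indicator_of_mem (Set.mem_singleton i), Pi.one_apply] at hge
  linarith [abs_le.1 hle, abs_le.1 hge]

end IsSauer

theorem stmt14 (S : Matrix (Fin 4) (Fin (2 ^ 4)) ℝ) (hS : IsSauer S)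
    (htype1 : ∃ j, S 0 j = 1)
    (htype2 : ∀ i j, i ≠ 0 → S i j ≠ 1)
    (r : Fin 4 → ℝ) (hr : ∀ i, 0 ≤ r i ∧ r i < 1)
    (hsub : Totally1Submodular (shiftMat r S)) :
    r = ![0, 1/2, 1/2, 1/2] := by
  have hr0 : r 0 = 0 := by
    obtain ⟨j, hj⟩ := htype1
    have h := hsub.abs_apply_le 0 j
    rw [shiftMat, of_apply, hj] at h
    linarith [(abs_le.1 h).2, (hr 0).1]
  have half (i j k : Fin 4) (hij : i ≠ j) (hik : i ≠ k) (hjk : j ≠ k) (hi : i ≠ 0) (hj : j ≠ 0)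
      (hk : k ≠ 0) : r i = 1 / 2 :=
    hS.eq_half_of_totally1Submodular_shiftMat hsub hr0 (htype2 i · hi) (htype2 j · hj)
      (htype2 k · hk) hi.symm hj.symm hk.symm hij hik hjk
  funext i
  fin_cases i
  · exact hr0
  · exact half 1 2 3 (by decide) (by decide) (by decide) (by decide) (by decide) (by decide)
  · exact half 2 1 3 (by decide) (by decide) (by decide) (by decide) (by decide) (by decide)
  · exact half 3 1 2 (by decide) (by decide) (by decide) (by decide) (by decide) (by decide)
end

section
/- Let S be a Sauer Matrix of size 4 in which at least three rows contain an entry equal to 1 (i.e., S is of type (3,1) or (4,0)). Then S is infeasible for translations: there is no r ∈ [0,1)^4 such that r+S is totally 1-submodular. -/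
open Matrix

/-!
A row containing an entry `1` has shift `0`, because its `1 × 1` minor `r i + 1` is at most `1`.
Hence `r + S` agrees with `S` on three rows, where `S` has, up to signs, a column of every support.
For `±1` entries, a `2 × 2` minor of absolute value at most `1` vanishes, so its four entries
multiply to `1`; the `3 × 3` minor on the three columns with two-element support is, up to sign,
a sum of two `±1` products, so its six nonzero entries multiply to `-1`. Pairing each of these
columns with the full-support column gives three `2 × 2` minors, and the product of those three
conditions says that the same six entries multiply to `1`.
-/

lemma mul_eq_one_of_abs_sub_le {a b : ℝ} (ha : a ^ 2 = 1) (hb : b ^ 2 = 1)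
    (h : |a - b| ≤ 1) : a * b = 1 := by
  have hsq : (a - b) ^ 2 ≤ 1 := (sq_le_one_iff_abs_le_one _).2 h
  have hab : (a * b) ^ 2 = 1 := by rw [mul_pow, ha, hb, one_mul]
  refine (sq_eq_one_iff.1 hab).resolve_right fun hneg => ?_
  have : (a - b) ^ 2 = 4 := by linear_combination ha + hb - 2 * hneg
  linarith

lemma mul_eq_neg_one_of_abs_add_le {a b : ℝ} (ha : a ^ 2 = 1) (hb : b ^ 2 = 1)
    (h : |a + b| ≤ 1) : a * b = -1 := by
  linear_combination
    -mul_eq_one_of_abs_sub_le ha (b := -b) (by rwa [neg_sq]) (by rwa [sub_neg_eq_add])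

namespace SignEntries

variable {m n : ℕ} {A : Matrix (Fin m) (Fin n) ℝ}

lemma sq_eq_one (hA : SignEntries A) {i : Fin m} {j : Fin n} (h : A i j ≠ 0) :
    A i j ^ 2 = 1 := by
  rcases hA i j with h' | h' | h' <;> simp_all

lemma submatrix (hA : SignEntries A) {m' : ℕ} (f : Fin m' → Fin m) :
    SignEntries (A.submatrix f id) :=
  fun i j => hA (f i) j

end SignEntries

namespace MinorsLE

variable {m n k : ℕ} {A : Matrix (Fin m) (Fin n) ℝ} {c : ℝ}

lemma abs_det_submatrix_le (h : MinorsLE k A c) (hc : 0 ≤ c) (f : Fin k → Fin m)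
    (g : Fin k → Fin n) : |(A.submatrix f g).det| ≤ c := by
  by_cases hf : f.Injective
  · by_cases hg : g.Injective
    · exact h ⟨f, hf⟩ ⟨g, hg⟩
    · obtain ⟨a, b, hab, hne⟩ := Function.not_injective_iff.1 hg
      rwa [det_zero_of_column_eq hne fun i => by simp [hab], abs_zero]
  · obtain ⟨a, b, hab, hne⟩ := Function.not_injective_iff.1 hf
    rwa [det_zero_of_row_eq hne (funext fun i => by simp [hab]), abs_zero]

lemma submatrix_rows (h : MinorsLE k A c) (hc : 0 ≤ c) {m' : ℕ} (f : Fin m' → Fin m) :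
    MinorsLE k (A.submatrix f id) c :=
  fun g g' => by simpa using h.abs_det_submatrix_le hc (f ∘ g) g'

lemma abs_det_fin_two_le (h : MinorsLE 2 A c) (hc : 0 ≤ c) (i i' : Fin m) (j j' : Fin n) :
    |A i j * A i' j' - A i j' * A i' j| ≤ c := by
  have := h.abs_det_submatrix_le hc ![i, i'] ![j, j']
  rwa [det_fin_two] at this

end MinorsLE

section Shift

variable {m n : ℕ} {t : Fin m → ℝ} {A : Matrix (Fin m) (Fin n) ℝ}

lemma shift_eq_zero_of_minorsLE_one (h : MinorsLE 1 (shiftMat t A) 1) {i : Fin m} {j : Fin n}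
    (ht : 0 ≤ t i) (hA : A i j = 1) : t i = 0 := by
  have := h.abs_det_submatrix_le zero_le_one (fun _ => i) (fun _ => j)
  simp only [det_unique, submatrix_apply, shiftMat, of_apply, hA] at this
  linarith [(abs_le.1 this).2]

lemma shiftMat_submatrix_of_eq_zero {m' : ℕ} {f : Fin m' → Fin m} (ht : ∀ a, t (f a) = 0) :
    (shiftMat t A).submatrix f id = A.submatrix f id := by
  ext a j
  simp [shiftMat, ht]

end Shift

theorem not_minorsLE_three_of_forall_support {n : ℕ} {A : Matrix (Fin 3) (Fin n) ℝ}
    (hA : SignEntries A) (hsupp : ∀ E : Set (Fin 3), ∃ j, ∀ i, A i j ≠ 0 ↔ i ∈ E)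
    (h2 : MinorsLE 2 A 1) : ¬ MinorsLE 3 A 1 := by
  intro h3
  obtain ⟨j01, h01⟩ := hsupp {0, 1}
  obtain ⟨j02, h02⟩ := hsupp {0, 2}
  obtain ⟨j12, h12⟩ := hsupp {1, 2}
  obtain ⟨j, hj⟩ := hsupp Set.univ
  have z01 : A 2 j01 = 0 := not_not.1 fun h => by simpa using (h01 2).1 h
  have z02 : A 1 j02 = 0 := not_not.1 fun h => by simpa using (h02 1).1 h
  have z12 : A 0 j12 = 0 := not_not.1 fun h => by simpa using (h12 0).1 h
  have hp := hA.sq_eq_one ((h01 0).2 (by simp))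
  have hq := hA.sq_eq_one ((h01 1).2 (by simp))
  have hs := hA.sq_eq_one ((h02 0).2 (by simp))
  have ht := hA.sq_eq_one ((h02 2).2 (by simp))
  have hu := hA.sq_eq_one ((h12 1).2 (by simp))
  have hv := hA.sq_eq_one ((h12 2).2 (by simp))
  have hx := hA.sq_eq_one ((hj 0).2 trivial)
  have hy := hA.sq_eq_one ((hj 1).2 trivial)
  have hz := hA.sq_eq_one ((hj 2).2 trivial)
  have d01 := h2.abs_det_fin_two_le zero_le_one 0 1 j01 j
  have d02 := h2.abs_det_fin_two_le zero_le_one 0 2 j02 j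
  have d12 := h2.abs_det_fin_two_le zero_le_one 1 2 j12 j
  have d3 : |A 0 j01 * A 1 j12 * A 2 j02 + A 0 j02 * A 1 j01 * A 2 j12| ≤ 1 := by
    have := h3.abs_det_submatrix_le zero_le_one id ![j01, j02, j12]
    rw [det_fin_three] at this
    simp [z01, z02, z12] at this
    rwa [← abs_neg, neg_add]
  set p := A 0 j01; set q := A 1 j01; set s := A 0 j02; set t := A 2 j02
  set u := A 1 j12; set v := A 2 j12; set x := A 0 j; set y := A 1 j; set z := A 2 j
  have e01 := mul_eq_one_of_abs_sub_le (by simp [mul_pow, *]) (by simp [mul_pow, *]) d01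
  have e02 := mul_eq_one_of_abs_sub_le (by simp [mul_pow, *]) (by simp [mul_pow, *]) d02
  have e12 := mul_eq_one_of_abs_sub_le (by simp [mul_pow, *]) (by simp [mul_pow, *]) d12
  have e3 := mul_eq_neg_one_of_abs_add_le (by simp [mul_pow, *]) (by simp [mul_pow, *]) d3
  have : (1 : ℝ) = -1 :=
    calc (1 : ℝ) = p * y * (x * q) * (s * z * (x * t)) * (u * z * (y * v)) := by
          rw [e01, e02, e12]; norm_num
      _ = p * u * t * (s * q * v) * x ^ 2 * y ^ 2 * z ^ 2 := by ring
      _ = -1 := by rw [e3, hx, hy, hz]; norm_num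
  norm_num at this

theorem stmt16 (S : Matrix (Fin 4) (Fin (2 ^ 4)) ℝ) (hS : IsSauer S)
    (htype : 3 ≤ Set.ncard {i : Fin 4 | ∃ j, S i j = 1}) :
    ¬ ∃ r : Fin 4 → ℝ, (∀ i, 0 ≤ r i ∧ r i < 1) ∧
        Totally1Submodular (shiftMat r S) := by
  classical
  rintro ⟨r, hr, hsub⟩
  obtain ⟨e⟩ := Function.Embedding.nonempty_of_card_le (α := Fin 3)
    (β := {i : Fin 4 | ∃ j, S i j = 1})
    (by rwa [Fintype.card_fin, ← Nat.card_eq_fintype_card, Nat.card_coe_set_eq])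
  let f := e.trans (Function.Embedding.subtype _)
  have hrf : ∀ a, r (f a) = 0 := fun a =>
    let ⟨_, hj⟩ := (e a).2
    shift_eq_zero_of_minorsLE_one (hsub 1) (hr _).1 hj
  have hsupp : ∀ E : Set (Fin 3), ∃ j, ∀ a, S.submatrix f id a j ≠ 0 ↔ a ∈ E := fun E =>
    let ⟨j, hj, _⟩ := hS.2 (f '' E)
    ⟨j, fun a => (hj (f a)).trans f.injective.mem_set_image⟩
  have hminors : ∀ k, MinorsLE k (S.submatrix f id) 1 := fun k => by
    simpa [shiftMat_submatrix_of_eq_zero hrf] using (hsub k).submatrix_rows zero_le_one f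
  exact not_minorsLE_three_of_forall_support (hS.1.submatrix f) hsupp (hminors 2) (hminors 3)
end

section
/- Let S ⊆ ℝ^m be a finite nonempty set. Then the difference set of the pyramid over S satisfies |D(pyr(S))| = |D(S)| + 2|S|, and the maximal (m+1)×(m+1) determinant absolute value of D(pyr(S)) equals the maximal m×m determinant absolute value of D(S), i.e., Δ(D(pyr(S))) = Δ(D(S)). -/
open Matrix

/-- The difference set `D(S) = S - S` of a set `S ⊆ ℝ^m`. -/
def diffSet {m : ℕ} (S : Set (Fin m → ℝ)) : Set (Fin m → ℝ) :=
  {x | ∃ a ∈ S, ∃ b ∈ S, x = a - b}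

/-- The pyramid `pyr(S) = (S × {0}) ∪ {e_{m+1}} ⊆ ℝ^{m+1}` over `S ⊆ ℝ^m`. -/
def pyr {m : ℕ} (S : Set (Fin m → ℝ)) : Set (Fin (m + 1) → ℝ) :=
  ((fun x : Fin m → ℝ => Fin.snoc x 0) '' S) ∪ {Fin.snoc (0 : Fin m → ℝ) 1}

/-- `Δ(T)`: the maximum absolute value of the determinant of a matrix whose columns form a
`d`-element subset of `T ⊆ ℝ^d` (by the `sSup` convention, this is `0` if `T` has fewer than
`d` elements). -/
noncomputable def DeltaSet {d : ℕ} (T : Set (Fin d → ℝ)) : ℝ :=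
  sSup {x : ℝ | ∃ v : Fin d → (Fin d → ℝ), (∀ i, v i ∈ T) ∧ Function.Injective v ∧
    x = |(Matrix.of fun i j => v j i).det|}

/-!
Every element of `D(pyr S)` is either `(d, 0)` with `d ∈ D(S)` or `±(e - (s, 0))` with `s ∈ S`;
the last coordinate (`0`, `1` or `-1`) tells the three kinds apart, which gives the count.

For the determinants, take `m + 1` rows in `D(pyr S)`. If all last coordinates vanish the
determinant is zero. Otherwise some row `±(e - (s₀, 0))` has last coordinate `±1`; subtracting
suitable multiples of it clears the last column elsewhere, and since
`(e - (s, 0)) - (e - (s₀, 0)) = (s₀ - s, 0)` every other row becomes `(d, 0)` with `d ∈ D(S)`.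
Expanding along the last column leaves an `m × m` determinant of rows in `D(S)`. Conversely,
appending the row `e - (s, 0)` to rows `(d, 0)` does not change the absolute determinant.
-/

theorem Fin.snoc_sub_snoc {n : ℕ} {α : Type*} [Sub α] (a b : Fin n → α) (c d : α) :
    (Fin.snoc a c : Fin (n + 1) → α) - Fin.snoc b d = Fin.snoc (a - b) (c - d) := by
  ext i
  refine Fin.lastCases ?_ (fun j => ?_) i <;> simp

namespace Matrix

theorem det_succ_column_of_ne_eq_zero {R : Type*} [CommRing R] {n : ℕ}
    (A : Matrix (Fin (n + 1)) (Fin (n + 1)) R) {i j : Fin (n + 1)} (h : ∀ i' ≠ i, A i' j = 0) :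
    A.det = (-1) ^ (i + j : ℕ) * A i j * (A.submatrix i.succAbove j.succAbove).det := by
  rw [det_succ_column A j, Finset.sum_eq_single i (fun i' _ hi' => by simp [h i' hi'])
    (by simp)]

theorem abs_det_succ_last_column_of_ne_eq_zero {R : Type*} [CommRing R] [LinearOrder R]
    [IsStrictOrderedRing R] {n : ℕ} (A : Matrix (Fin (n + 1)) (Fin (n + 1)) R) {i : Fin (n + 1)}
    (h : ∀ i' ≠ i, A i' (Fin.last n) = 0) :
    |A.det| = |A i (Fin.last n)| * |(A.submatrix i.succAbove Fin.castSucc).det| := by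
  rw [det_succ_column_of_ne_eq_zero A h, Fin.succAbove_last, abs_mul, abs_mul, abs_pow, abs_neg,
    abs_one, one_pow, one_mul]

end Matrix

section DiffSet

variable {m : ℕ} {S : Set (Fin m → ℝ)}

theorem diffSet_finite (hS : S.Finite) : (diffSet S).Finite :=
  (hS.image2 (· - ·) hS).subset fun _ ⟨a, ha, b, hb, hx⟩ => ⟨a, ha, b, hb, hx.symm⟩

theorem pyr_finite (hS : S.Finite) : (pyr S).Finite :=
  (hS.image _).union (Set.finite_singleton _)

theorem diffSet_pyr (hne : S.Nonempty) :
    diffSet (pyr S) =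
      (fun d => Fin.snoc d 0) '' diffSet S ∪ (fun s => Fin.snoc s (-1)) '' S ∪
        (fun s => Fin.snoc (-s) 1) '' S := by
  ext x
  constructor
  · rintro ⟨a, ha, b, hb, rfl⟩
    rcases ha with ⟨a, ha, rfl⟩ | rfl <;> rcases hb with ⟨b, hb, rfl⟩ | rfl <;>
      simp only [Fin.snoc_sub_snoc]
    · exact Or.inl <| Or.inl ⟨a - b, ⟨a, ha, b, hb, rfl⟩, by simp⟩
    · exact Or.inl <| Or.inr ⟨a, ha, by simp⟩
    · exact Or.inr ⟨b, hb, by simp⟩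
    · obtain ⟨s, hs⟩ := hne
      exact Or.inl <| Or.inl ⟨0, ⟨s, hs, s, hs, (sub_self s).symm⟩, by simp⟩
  · rintro ((⟨_, ⟨a, ha, b, hb, rfl⟩, rfl⟩ | ⟨s, hs, rfl⟩) | ⟨s, hs, rfl⟩)
    · exact ⟨_, Or.inl ⟨a, ha, rfl⟩, _, Or.inl ⟨b, hb, rfl⟩, by simp [Fin.snoc_sub_snoc]⟩
    · exact ⟨_, Or.inl ⟨s, hs, rfl⟩, _, Or.inr rfl, by simp [Fin.snoc_sub_snoc]⟩
    · exact ⟨_, Or.inr rfl, _, Or.inl ⟨s, hs, rfl⟩, by simp [Fin.snoc_sub_snoc]⟩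

theorem ncard_diffSet_pyr (hS : S.Finite) (hne : S.Nonempty) :
    (diffSet (pyr S)).ncard = (diffSet S).ncard + 2 * S.ncard := by
  have h₁₂ : Disjoint ((fun d => (Fin.snoc d 0 : Fin (m + 1) → ℝ)) '' diffSet S)
      ((fun s => Fin.snoc s (-1)) '' S) :=
    Set.disjoint_image_image fun _ _ _ _ => by simp
  have h₁₃ : Disjoint ((fun d => (Fin.snoc d 0 : Fin (m + 1) → ℝ)) '' diffSet S)
      ((fun s => Fin.snoc (-s) 1) '' S) :=
    Set.disjoint_image_image fun _ _ _ _ => by simp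
  have h₂₃ : Disjoint ((fun s => (Fin.snoc s (-1) : Fin (m + 1) → ℝ)) '' S)
      ((fun s => Fin.snoc (-s) 1) '' S) :=
    Set.disjoint_image_image fun _ _ _ _ => by norm_num
  have hD := diffSet_finite hS
  rw [diffSet_pyr hne, Set.ncard_union_eq (Set.disjoint_union_left.2 ⟨h₁₃, h₂₃⟩)
      ((hD.image _).union (hS.image _)) (hS.image _),
    Set.ncard_union_eq h₁₂ (hD.image _) (hS.image _),
    Set.ncard_image_of_injective _ fun _ _ h => by simpa using h,
    Set.ncard_image_of_injective _ fun _ _ h => by simpa using h,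
    Set.ncard_image_of_injective S (f := fun s => (Fin.snoc (-s) 1 : Fin (m + 1) → ℝ))
      fun _ _ h => by simpa using h]
  ring

end DiffSet

section DeltaSet

variable {d : ℕ} {T : Set (Fin d → ℝ)}

theorem deltaSet_nonneg : 0 ≤ DeltaSet T :=
  Real.sSup_nonneg fun _ ⟨_, _, _, hx⟩ => hx ▸ abs_nonneg _

theorem deltaSet_le {c : ℝ} (hc : 0 ≤ c)
    (h : ∀ v : Fin d → Fin d → ℝ, (∀ i, v i ∈ T) → |(of v).det| ≤ c) : DeltaSet T ≤ c :=
  Real.sSup_le (fun _ ⟨v, hv, _, hx⟩ => hx ▸ det_transpose (of v) ▸ h v hv) hc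

theorem abs_det_le_deltaSet (hT : T.Finite) {v : Fin d → Fin d → ℝ} (hv : ∀ i, v i ∈ T) :
    |(of v).det| ≤ DeltaSet T := by
  by_cases hinj : Function.Injective v
  · refine le_csSup (((Set.Finite.pi fun _ => hT).image fun v => |(of v)ᵀ.det|).bddAbove.mono ?_)
      ⟨v, hv, hinj, by rw [← det_transpose]; rfl⟩
    rintro _ ⟨v, hv, -, rfl⟩
    exact ⟨v, fun i _ => hv i, rfl⟩
  · obtain ⟨i, j, hij, hne⟩ := Function.not_injective_iff.1 hinj
    rw [det_zero_of_row_eq (M := of v) hne hij, abs_zero]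
    exact deltaSet_nonneg

end DeltaSet

section Pyramid

variable {m : ℕ} {S : Set (Fin m → ℝ)}

theorem mem_diffSet_pyr_cases (hne : S.Nonempty) {x : Fin (m + 1) → ℝ}
    (hx : x ∈ diffSet (pyr S)) :
    (x (Fin.last m) = 0 ∧ Fin.init x ∈ diffSet S) ∨
      ∃ s ∈ S, (x (Fin.last m) = -1 ∧ Fin.init x = s) ∨ (x (Fin.last m) = 1 ∧ Fin.init x = -s) := by
  rw [diffSet_pyr hne] at hx
  rcases hx with (⟨d, hd, rfl⟩ | ⟨s, hs, rfl⟩) | ⟨s, hs, rfl⟩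
  · exact Or.inl ⟨by simp, by simpa using hd⟩
  · exact Or.inr ⟨s, hs, Or.inl ⟨by simp, by simp⟩⟩
  · exact Or.inr ⟨s, hs, Or.inr ⟨by simp, by simp⟩⟩

theorem abs_last_eq_one_of_mem_diffSet_pyr (hne : S.Nonempty) {x : Fin (m + 1) → ℝ}
    (hx : x ∈ diffSet (pyr S)) (hx0 : x (Fin.last m) ≠ 0) : |x (Fin.last m)| = 1 := by
  rcases mem_diffSet_pyr_cases hne hx with ⟨h, -⟩ | ⟨s, -, ⟨h, -⟩ | ⟨h, -⟩⟩
  · exact absurd h hx0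
  all_goals simp [h]

theorem init_sub_smul_mem_diffSet (hne : S.Nonempty) {x y : Fin (m + 1) → ℝ}
    (hx : x ∈ diffSet (pyr S)) (hy : y ∈ diffSet (pyr S)) (hy0 : y (Fin.last m) ≠ 0) :
    Fin.init (x - (x (Fin.last m) * y (Fin.last m)) • y) ∈ diffSet S := by
  have hinit : Fin.init (x - (x (Fin.last m) * y (Fin.last m)) • y) =
      Fin.init x - (x (Fin.last m) * y (Fin.last m)) • Fin.init y := rfl
  rw [hinit]
  rcases mem_diffSet_pyr_cases hne hx with ⟨hxl, hxD⟩ | ⟨s, hs, ⟨hxl, hxi⟩ | ⟨hxl, hxi⟩⟩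
  · simpa [hxl] using hxD
  all_goals
    rcases mem_diffSet_pyr_cases hne hy with ⟨hyl, -⟩ | ⟨t, ht, ⟨hyl, hyi⟩ | ⟨hyl, hyi⟩⟩
    · exact absurd hyl hy0
  · exact ⟨s, hs, t, ht, by rw [hxl, hyl, hxi, hyi]; module⟩
  · exact ⟨s, hs, t, ht, by rw [hxl, hyl, hxi, hyi]; module⟩
  · exact ⟨t, ht, s, hs, by rw [hxl, hyl, hxi, hyi]; module⟩
  · exact ⟨t, ht, s, hs, by rw [hxl, hyl, hxi, hyi]; module⟩

theorem abs_det_le_deltaSet_diffSet_of_mem_diffSet_pyr (hS : S.Finite) (hne : S.Nonempty)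
    {w : Fin (m + 1) → Fin (m + 1) → ℝ} (hw : ∀ i, w i ∈ diffSet (pyr S)) :
    |(of w).det| ≤ DeltaSet (diffSet S) := by
  by_cases hcol : ∀ i, w i (Fin.last m) = 0
  · rw [det_eq_zero_of_column_eq_zero (A := of w) (Fin.last m) hcol, abs_zero]
    exact deltaSet_nonneg
  push Not at hcol
  obtain ⟨k, hk⟩ := hcol
  have hk1 := abs_last_eq_one_of_mem_diffSet_pyr hne (hw k) hk
  set c : Fin (m + 1) → ℝ := fun i => w i (Fin.last m) * w k (Fin.last m)
  set r : Fin (m + 1) → Fin (m + 1) → ℝ := Function.update (fun i => w i - c i • w k) k (w k)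
  have hdet : (of r).det = (of w).det :=
    det_eq_of_forall_row_eq_smul_add_const (fun i => if i = k then 0 else -c i) k (by simp)
      fun i j => by by_cases hi : i = k <;> simp [r, hi, sub_eq_add_neg]
  have hcol' : ∀ i ≠ k, of r i (Fin.last m) = 0 := by
    intro i hi
    have : w k (Fin.last m) * w k (Fin.last m) = 1 := by rw [← abs_mul_abs_self, hk1, one_mul]
    simp only [of_apply, r, c, Function.update_of_ne hi, Pi.sub_apply, Pi.smul_apply, smul_eq_mul]
    linear_combination -w i (Fin.last m) * this
  rw [← hdet, abs_det_succ_last_column_of_ne_eq_zero _ hcol']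
  simp only [of_apply, r, Function.update_self, hk1, one_mul]
  refine abs_det_le_deltaSet (diffSet_finite hS) fun i => ?_
  simp only [of_apply, Function.update_of_ne (Fin.succAbove_ne k i)]
  exact init_sub_smul_mem_diffSet hne (hw (k.succAbove i)) (hw k) hk

theorem deltaSet_diffSet_le_deltaSet_diffSet_pyr (hS : S.Finite) (hne : S.Nonempty) :
    DeltaSet (diffSet S) ≤ DeltaSet (diffSet (pyr S)) := by
  obtain ⟨s, hs⟩ := hne
  refine deltaSet_le deltaSet_nonneg fun v hv => ?_
  let w : Fin (m + 1) → Fin (m + 1) → ℝ := Fin.snoc (fun i => Fin.snoc (v i) 0) (Fin.snoc (-s) 1)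
  have hw : ∀ i, w i ∈ diffSet (pyr S) := by
    rw [diffSet_pyr ⟨s, hs⟩]
    refine Fin.lastCases ?_ fun i => ?_
    · exact Or.inr ⟨s, hs, by simp [w]⟩
    · exact Or.inl (Or.inl ⟨v i, hv i, by simp [w]⟩)
  have hcol : ∀ i ≠ Fin.last m, of w i (Fin.last m) = 0 := by
    intro i hi
    obtain ⟨i, rfl⟩ := Fin.exists_castSucc_eq.2 hi
    simp [w]
  have hminor : (of w).submatrix (Fin.last m).succAbove Fin.castSucc = of v := by
    ext i j
    simp [w]
  calc |(of v).det| = |(of w).det| := by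
        rw [abs_det_succ_last_column_of_ne_eq_zero _ hcol, hminor]
        simp [w]
    _ ≤ DeltaSet (diffSet (pyr S)) := abs_det_le_deltaSet (diffSet_finite (pyr_finite hS)) hw

theorem deltaSet_diffSet_pyr (hS : S.Finite) (hne : S.Nonempty) :
    DeltaSet (diffSet (pyr S)) = DeltaSet (diffSet S) :=
  le_antisymm
    (deltaSet_le deltaSet_nonneg fun _ hw =>
      abs_det_le_deltaSet_diffSet_of_mem_diffSet_pyr hS hne hw)
    (deltaSet_diffSet_le_deltaSet_diffSet_pyr hS hne)

end Pyramid

theorem stmt18 (m : ℕ) (S : Set (Fin m → ℝ)) (hfin : S.Finite) (hne : S.Nonempty) :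
    (diffSet (pyr S)).ncard = (diffSet S).ncard + 2 * S.ncard ∧
    DeltaSet (diffSet (pyr S)) = DeltaSet (diffSet S) :=
  ⟨ncard_diffSet_pyr hfin hne, deltaSet_diffSet_pyr hfin hne⟩
end
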